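/- arXiv:2107.06315 — 7 statements merged into one kernel-verified Lean document; each statement's English description precedes it below -/
import Mathlib

section
/- Let C be a set of relations, X a C-pattern, and λ = (x_{n1},...,x_{nn}). If the tiling M_C(X) has no Λ1-free tiles (every tile meets the top row n), then X is a vertex of the polyhedron P_C(λ), i.e., the minimal face of P_C(λ) containing X has dimension 0. -/
open scoped BigOperators

namespace GT

/-- Index set 𝔙 = {(i,j) : 1 ≤ j ≤ i ≤ n}, encoded 0-based:
`p.val.1` is the (0-based) row, `p.val.2` the (0-based) column. -/
abbrev Idx (n : ℕ) := {p : Fin n × Fin n // p.2 ≤ p.1}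

/-- Points of ℝ^{n(n+1)/2}, entries indexed by `Idx n`. -/
abbrev Pattern (n : ℕ) := Idx n → ℝ

/-- A set of relations is a set of pairs of indices. -/
abbrev Rels (n : ℕ) := Set (Idx n × Idx n)

/-- `X` is a `C`-pattern iff `x_{ij} ≥ x_{rs}` for all `((i,j);(r,s)) ∈ C`. -/
def IsPattern {n : ℕ} (C : Rels n) (X : Pattern n) : Prop :=
  ∀ pr ∈ C, X pr.2 ≤ X pr.1

/-- The polyhedron `P_C` of all `C`-patterns. -/
def PC {n : ℕ} (C : Rels n) : Set (Pattern n) := {X | IsPattern C X}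

/-- 0-based row of a vertex; paper row `i` corresponds to `row p = i - 1`,
so the top row (paper row `n`) is `row p = n - 1`. -/
def row {n : ℕ} (p : Idx n) : ℕ := p.val.1.val

/-- `P_C(λ)` : `C`-patterns whose top row equals `λ`. -/
def PCl {n : ℕ} (C : Rels n) (lam : Fin n → ℝ) : Set (Pattern n) :=
  {X | IsPattern C X ∧ ∀ p : Idx n, row p = n - 1 → X p = lam p.val.2}

/-- `R_k(X) = Σ_{i=1}^k x_{ki}` (paper row `k` is 0-based row `k-1`). -/
def Rk {n : ℕ} (X : Pattern n) (k : Fin n) : ℝ :=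
  ∑ j : Fin n, if h : j ≤ k then X ⟨(k, j), h⟩ else 0

/-- The `k`-th weight map: `w_1(X) = x_{11}` and `w_k(X) = R_k(X) - R_{k-1}(X)`. -/
def wk {n : ℕ} (X : Pattern n) (k : Fin n) : ℝ :=
  Rk X k - (if _ : 0 < k.val then
    Rk X ⟨k.val - 1, Nat.lt_of_le_of_lt (Nat.sub_le _ _) k.isLt⟩ else 0)

/-- `P_C(λ,μ)` : elements of `P_C(λ)` with weights `μ`. -/
def PClm {n : ℕ} (C : Rels n) (lam mu : Fin n → ℝ) : Set (Pattern n) :=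
  {X | X ∈ PCl C lam ∧ ∀ k : Fin n, wk X k = mu k}

/-- Edges of the (undirected) graph `G(C)` along which the entries of `X` agree. -/
def edge {n : ℕ} (C : Rels n) (X : Pattern n) (p q : Idx n) : Prop :=
  ((p, q) ∈ C ∨ (q, p) ∈ C) ∧ X p = X q

/-- `(i,j)` and `(r,s)` are in the same tile of the tiling `M_C(X)` iff they are
joined by a walk in `G(C)` along which all entries of `X` are equal. -/
def sameTile {n : ℕ} (C : Rels n) (X : Pattern n) : Idx n → Idx n → Prop :=
  Relation.EqvGen (edge C X)

/-- The tile of `M_C(X)` containing `p`. -/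
def tile {n : ℕ} (C : Rels n) (X : Pattern n) (p : Idx n) : Set (Idx n) :=
  {q | sameTile C X p q}

/-- The set of tiles of the tiling `M_C(X)`. -/
def tiles {n : ℕ} (C : Rels n) (X : Pattern n) : Set (Set (Idx n)) :=
  {T | ∃ p, T = tile C X p}

/-- A tile is `Λ₁`-free if it contains no vertex in the top row `n`. -/
def L1free {n : ℕ} (T : Set (Idx n)) : Prop := ∀ q ∈ T, row q ≠ n - 1

/-- A tile is `Λ₂`-free if it contains no vertex in row `1` nor in the top row `n`. -/
def L2free {n : ℕ} (T : Set (Idx n)) : Prop := ∀ q ∈ T, row q ≠ n - 1 ∧ row q ≠ 0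

/-- `D_X(P) = {Y : X + Y ∈ P and X - Y ∈ P}`. -/
def DX {E : Type*} [AddCommGroup E] (P : Set E) (x : E) : Set E :=
  {y | x + y ∈ P ∧ x - y ∈ P}

/-- `𝔙(C)` : vertices that are source or target of a relation of `C`. -/
def VC {n : ℕ} (C : Rels n) : Set (Idx n) := {p | ∃ q, (p, q) ∈ C ∨ (q, p) ∈ C}

/-- Existence of a directed path in `G(C)`, i.e. `p ⪰_C q`. -/
def pathTo {n : ℕ} (C : Rels n) : Idx n → Idx n → Prop :=
  Relation.ReflTransGen (fun p q => (p, q) ∈ C)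

/-- `C` is top-connected if every vertex of `𝔙(C)` not in the top row has a
directed path to some vertex in the top row. -/
def TopConnected {n : ℕ} (C : Rels n) : Prop :=
  ∀ p ∈ VC C, row p ≠ n - 1 → ∃ r : Idx n, row r = n - 1 ∧ pathTo C p r

/-- `𝒫⁺` : points of `𝒫` with nonnegative entries on `𝔙(C)`. -/
def Pplus {n : ℕ} (C : Rels n) (P : Set (Pattern n)) : Set (Pattern n) :=
  {X ∈ P | ∀ p ∈ VC C, 0 ≤ X p}

section Faces

variable {E : Type*} [AddCommGroup E] [Module ℝ E]

/-- A polyhedron: an intersection of finitely many closed halfspaces. -/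
def IsPolyhedron (P : Set E) : Prop :=
  ∃ (k : ℕ) (f : Fin k → E →ₗ[ℝ] ℝ) (c : Fin k → ℝ), P = {x | ∀ i, f i x ≤ c i}

/-- A face of `P`: either `P` itself, or the intersection of `P` with a
supporting hyperplane. -/
def IsFace (P F : Set E) : Prop :=
  F = P ∨ ∃ (f : E →ₗ[ℝ] ℝ) (c : ℝ), f ≠ 0 ∧ (∀ x ∈ P, f x ≤ c) ∧
    (∃ x ∈ P, f x = c) ∧ F = {x ∈ P | f x = c}

/-- The dimension of a face: the dimension of its affine span. -/
noncomputable def faceDim (F : Set E) : ℕ :=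
  Module.finrank ℝ (affineSpan ℝ F).direction

/-- `F` is the minimal face of `P` containing `x`. -/
def IsMinFace (P F : Set E) (x : E) : Prop :=
  IsFace P F ∧ x ∈ F ∧ ∀ F', IsFace P F' → x ∈ F' → F ⊆ F'

end Faces

end GT

/-- if `M_C(X)` has no `Λ₁`-free tiles then `X` is a vertex of
`P_C(λ)` (the minimal face of `P_C(λ)` containing `X` has dimension 0). -/
theorem stmt8 {n : ℕ} (C : GT.Rels n) (X : GT.Pattern n) (hX : GT.IsPattern C X)
    (lam : Fin n → ℝ)
    (hlam : ∀ p : GT.Idx n, GT.row p = n - 1 → X p = lam p.val.2)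
    (hfree : ∀ T ∈ GT.tiles C X, ¬ GT.L1free T)
    (F : Set (GT.Pattern n)) (hF : GT.IsMinFace (GT.PCl C lam) F X) :
    GT.faceDim F = 0 := by
  classical
  obtain ⟨hFace, hXF, hmin⟩ := hF
  have hXP : X ∈ GT.PCl C lam := ⟨hX, hlam⟩
  -- every vertex is in the same tile as some top-row vertex
  have htop : ∀ p : GT.Idx n, ∃ q, GT.sameTile C X p q ∧ GT.row q = n - 1 := by
    intro p
    have h := hfree (GT.tile C X p) ⟨p, rfl⟩
    simp only [GT.L1free, not_forall] at h
    obtain ⟨q, hq, hq2⟩ := h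
    exact ⟨q, hq, by tauto⟩
  set S : Finset (GT.Idx n × GT.Idx n) :=
    Finset.univ.filter (fun pr => pr ∈ C ∧ X pr.1 = X pr.2) with hS
  set f : GT.Pattern n →ₗ[ℝ] ℝ :=
    ∑ pr ∈ S, ((LinearMap.proj pr.2 : GT.Pattern n →ₗ[ℝ] ℝ) - LinearMap.proj pr.1)
    with hf
  have hfapp : ∀ Y : GT.Pattern n, f Y = ∑ pr ∈ S, (Y pr.2 - Y pr.1) := by
    intro Y
    simp [hf, LinearMap.sum_apply]
  have hnonpos : ∀ Y ∈ GT.PCl C lam, ∀ pr ∈ S, Y pr.2 - Y pr.1 ≤ 0 := by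
    intro Y hY pr hpr
    rw [hS, Finset.mem_filter] at hpr
    have := hY.1 pr hpr.2.1
    linarith
  have hbound : ∀ Y ∈ GT.PCl C lam, f Y ≤ 0 := by
    intro Y hY
    rw [hfapp]
    exact Finset.sum_nonpos (hnonpos Y hY)
  have hfX : f X = 0 := by
    rw [hfapp]
    apply Finset.sum_eq_zero
    intro pr hpr
    rw [hS, Finset.mem_filter] at hpr
    rw [hpr.2.2]; ring
  -- key: any point of the polytope on which f vanishes equals X
  have key : ∀ Y ∈ GT.PCl C lam, f Y = 0 → Y = X := by
    intro Y hY hfY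
    rw [hfapp] at hfY
    have hterms := (Finset.sum_eq_zero_iff_of_nonpos (hnonpos Y hY)).mp hfY
    have hconst : ∀ p q, GT.sameTile C X p q → Y p = Y q ∧ X p = X q := by
      intro p q h
      induction h with
      | rel a b hab =>
        refine ⟨?_, hab.2⟩
        rcases hab.1 with h1 | h1
        · have hmem : (a, b) ∈ S := by
            rw [hS, Finset.mem_filter]
            exact ⟨Finset.mem_univ _, h1, hab.2⟩
          have := hterms _ hmem
          simp only at this
          linarith
        · have hmem : (b, a) ∈ S := by
            rw [hS, Finset.mem_filter]
            exact ⟨Finset.mem_univ _, h1, hab.2.symm⟩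
          have := hterms _ hmem
          simp only at this
          linarith
      | refl a => exact ⟨rfl, rfl⟩
      | symm a b _ ih => exact ⟨ih.1.symm, ih.2.symm⟩
      | trans a b c _ _ ih1 ih2 => exact ⟨ih1.1.trans ih2.1, ih1.2.trans ih2.2⟩
    funext p
    obtain ⟨q, hpq, hrow⟩ := htop p
    obtain ⟨hY1, hX1⟩ := hconst p q hpq
    rw [hY1, hX1, hY.2 q hrow, hlam q hrow]
  -- F = {X}
  have hFX : F = {X} := by
    have hsub : F ⊆ {X} := by
      by_cases hf0 : f = 0
      · have hPsub : GT.PCl C lam ⊆ {X} := by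
          intro Y hY
          have : f Y = 0 := by rw [hf0]; rfl
          exact key Y hY this
        rcases hFace with h | ⟨g, c, _, _, _, h⟩
        · rw [h]; exact hPsub
        · rw [h]; exact fun x hx => hPsub hx.1
      · have hface' : GT.IsFace (GT.PCl C lam) {x ∈ GT.PCl C lam | f x = 0} :=
          Or.inr ⟨f, 0, hf0, hbound, ⟨X, hXP, hfX⟩, rfl⟩
        have hsub' := hmin _ hface' ⟨hXP, hfX⟩
        intro Y hY
        have := hsub' hY
        exact key Y this.1 this.2
    exact Set.Subset.antisymm hsub (Set.singleton_subset_iff.mpr hXF)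
  rw [hFX]
  unfold GT.faceDim
  rw [direction_affineSpan, vectorSpan_singleton]
  simp
end

section
/- Let C be a set of relations, X a C-pattern, λ = (x_{n1},...,x_{nn}), μ = (w_1(X),...,w_n(X)). If the tiling M_C(X) has no Λ2-free tiles (every tile meets row 1 or row n), then X is a vertex of P_C(λ,μ). -/
open scoped BigOperators

/-- if `M_C(X)` has no `Λ₂`-free tiles then `X` is a vertex of
`P_C(λ,μ)` (the minimal face of `P_C(λ,μ)` containing `X` has dimension 0). -/
theorem stmt9 {n : ℕ} (C : GT.Rels n) (X : GT.Pattern n) (hX : GT.IsPattern C X)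
    (lam mu : Fin n → ℝ)
    (hlam : ∀ p : GT.Idx n, GT.row p = n - 1 → X p = lam p.val.2)
    (hmu : ∀ k : Fin n, GT.wk X k = mu k)
    (hfree : ∀ T ∈ GT.tiles C X, ¬ GT.L2free T)
    (F : Set (GT.Pattern n)) (hF : GT.IsMinFace (GT.PClm C lam mu) F X) :
    GT.faceDim F = 0 := by
  classical
  have hXP : X ∈ GT.PClm C lam mu := ⟨⟨hX, hlam⟩, hmu⟩
  set P := GT.PClm C lam mu with hPdef
  -- tight relations
  set T : Set (GT.Idx n × GT.Idx n) := {pr ∈ C | X pr.1 = X pr.2} with hT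
  set Tf := (Set.toFinite T).toFinset with hTf
  set f : GT.Pattern n →ₗ[ℝ] ℝ :=
    ∑ pr ∈ Tf, ((LinearMap.proj pr.2 : GT.Pattern n →ₗ[ℝ] ℝ) - (LinearMap.proj pr.1 : GT.Pattern n →ₗ[ℝ] ℝ)) with hf
  have hfapp : ∀ Y : GT.Pattern n, f Y = ∑ pr ∈ Tf, (Y pr.2 - Y pr.1) := by
    intro Y; simp [hf]
  have hmemTf : ∀ pr, pr ∈ Tf ↔ pr ∈ T := by
    intro pr; rw [hTf, Set.Finite.mem_toFinset]
  -- core lemma: Y ∈ P and tight on T implies Y = X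
  have core : ∀ Y, Y ∈ P → (∀ pr ∈ T, Y pr.1 = Y pr.2) → Y = X := by
    intro Y hYP htight
    have hconst : ∀ p q, GT.sameTile C X p q → Y p - X p = Y q - X q := by
      intro p q h
      induction h with
      | rel a b hab =>
          obtain ⟨hc, hx⟩ := hab
          have hy : Y a = Y b := by
            cases hc with
            | inl h1 => exact htight (a, b) ⟨h1, hx⟩
            | inr h2 => exact (htight (b, a) ⟨h2, hx.symm⟩).symm
          rw [hy, hx]
      | refl => rfl
      | symm _ _ _ ih => exact ih.symm
      | trans _ _ _ _ _ ih1 ih2 => exact ih1.trans ih2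
    funext p
    have hnot := hfree (GT.tile C X p) ⟨p, rfl⟩
    rw [GT.L2free] at hnot
    push_neg at hnot
    obtain ⟨q, hq, hq2⟩ := hnot
    have hZq : Y q - X q = 0 := by
      by_cases htop : GT.row q = n - 1
      · have h1 : Y q = lam q.val.2 := hYP.1.2 q htop
        have h2 : X q = lam q.val.2 := hlam q htop
        rw [h1, h2, sub_self]
      · have h0 : GT.row q = 0 := hq2 htop
        have hn : 0 < n := q.val.1.pos
        set k0 : Fin n := ⟨0, hn⟩ with hk0
        have hq1 : q.val.1 = k0 := Fin.ext h0
        have hq2' : q.val.2 = k0 := by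
          have := q.prop
          rw [hq1] at this
          exact Fin.ext (Nat.le_zero.mp this)
        have hqeq : q = ⟨(k0, k0), le_rfl⟩ := by
          apply Subtype.ext
          exact Prod.ext hq1 hq2'
        have hRk : ∀ W : GT.Pattern n, GT.Rk W k0 = W ⟨(k0, k0), le_rfl⟩ := by
          intro W
          rw [GT.Rk, Fintype.sum_eq_single k0]
          · rw [dif_pos (le_refl k0)]
          · intro j hj
            rw [dif_neg]
            intro h
            exact hj (Fin.ext (Nat.le_zero.mp h))
        have hwk : ∀ W : GT.Pattern n, GT.wk W k0 = W ⟨(k0, k0), le_rfl⟩ := by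
          intro W
          rw [GT.wk, dif_neg (by simp [hk0]), hRk]
          ring
        have hYX : Y ⟨(k0, k0), le_rfl⟩ = X ⟨(k0, k0), le_rfl⟩ := by
          have h1 := hYP.2 k0
          have h2 := hmu k0
          rw [hwk] at h1 h2
          rw [h1, h2]
        rw [hqeq, hYX, sub_self]
    have h1 := hconst p q hq
    have h2 : Y p - X p = 0 := h1.trans hZq
    linarith
  -- f is ≤ 0 on P and vanishes at X
  have hfle : ∀ Y ∈ P, f Y ≤ 0 := by
    intro Y hYP
    rw [hfapp]
    apply Finset.sum_nonpos
    intro pr hpr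
    have hprT := (hmemTf pr).mp hpr
    have := hYP.1.1 pr hprT.1
    linarith
  have hfX : f X = 0 := by
    rw [hfapp]
    apply Finset.sum_eq_zero
    intro pr hpr
    have hprT := (hmemTf pr).mp hpr
    rw [hprT.2, sub_self]
  -- the candidate face
  have hFace' : GT.IsFace P {Y ∈ P | f Y = 0} := by
    by_cases hf0 : f = 0
    · left
      ext Y
      simp [hf0]
    · right
      exact ⟨f, 0, hf0, hfle, ⟨X, hXP, hfX⟩, rfl⟩
  have hXF' : X ∈ {Y ∈ P | f Y = 0} := ⟨hXP, hfX⟩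
  have hsub : F ⊆ {Y ∈ P | f Y = 0} := hF.2.2 _ hFace' hXF'
  have hsingle : {Y ∈ P | f Y = 0} ⊆ {X} := by
    intro Y hY
    obtain ⟨hYP, hYf⟩ := hY
    have htight : ∀ pr ∈ T, Y pr.1 = Y pr.2 := by
      intro pr hprT
      have hterm : ∀ pr' ∈ Tf, Y pr'.2 - Y pr'.1 ≤ 0 := by
        intro pr' hpr'
        have h := ((hmemTf pr').mp hpr').1
        have := hYP.1.1 pr' h
        linarith
      rw [hfapp] at hYf
      have := (Finset.sum_eq_zero_iff_of_nonpos hterm).mp hYf pr ((hmemTf pr).mpr hprT)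
      linarith
    exact core Y hYP htight
  have hFX : F = {X} := by
    apply Set.Subset.antisymm (hsub.trans hsingle)
    exact Set.singleton_subset_iff.mpr hF.2.1
  rw [hFX, GT.faceDim, direction_affineSpan]
  have : vectorSpan ℝ ({X} : Set (GT.Pattern n)) = ⊥ := vectorSpan_singleton (k := ℝ) X
  rw [this]
  exact finrank_bot ℝ (GT.Pattern n)
end

section
/- Let C be a set of relations and X a C-pattern whose tiling M_C(X) has tiles M_1, ..., M_d. For each tile M_k, let E^{(k)} ∈ R^{n(n+1)/2} be the indicator vector of M_k (entries 1 on positions in M_k, else 0). Then for all sufficiently small ε > 0, both X + εE^{(k)} and X − εE^{(k)} are C-patterns; consequently E^{(1)},...,E^{(d)} are d linearly independent vectors in D_X(P_C), and the minimal face of P_C containing X has dimension at least d. -/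
open scoped BigOperators

/-- the indicator vectors of the tiles `M_1,…,M_d` of `M_C(X)`
(given by representatives `R 1,…,R d`) can be rescaled into `D_X(P_C)`; they
are linearly independent, so the minimal face of `P_C` containing `X` has
dimension at least `d`. -/
theorem stmt10 {n : ℕ} (C : GT.Rels n) (X : GT.Pattern n) (hX : GT.IsPattern C X)
    (d : ℕ) (R : Fin d → GT.Idx n)
    (hR1 : ∀ i j, i ≠ j → ¬ GT.sameTile C X (R i) (R j))
    (hR2 : ∀ p : GT.Idx n, ∃ i, GT.sameTile C X (R i) p)
    (E : Fin d → GT.Pattern n)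
    (hE : ∀ i, E i = (GT.tile C X (R i)).indicator fun _ => (1 : ℝ)) :
    (∃ ε₀ > (0 : ℝ), ∀ ε : ℝ, 0 < ε → ε ≤ ε₀ → ∀ i,
      X + ε • E i ∈ GT.PC C ∧ X - ε • E i ∈ GT.PC C) ∧
    LinearIndependent ℝ E ∧
    (∀ i, ∃ ε > (0 : ℝ), ε • E i ∈ GT.DX (GT.PC C) X) ∧
    (∀ F, GT.IsMinFace (GT.PC C) F X → d ≤ GT.faceDim F) := by
  classical
  -- Basic facts about the indicator vectors E
  have hEval : ∀ i p, E i p = if GT.sameTile C X (R i) p then (1:ℝ) else 0 := by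
    intro i p
    rw [hE i]
    by_cases h : GT.sameTile C X (R i) p
    · rw [if_pos h, Set.indicator_of_mem (show p ∈ GT.tile C X (R i) from h)]
    · rw [if_neg h, Set.indicator_of_notMem (show p ∉ GT.tile C X (R i) from h)]
  have hEnn : ∀ i p, 0 ≤ E i p := by
    intro i p; rw [hEval]; split <;> norm_num
  have hEle1 : ∀ i p, E i p ≤ 1 := by
    intro i p; rw [hEval]; split <;> norm_num
  have hEeq : ∀ i (p q : GT.Idx n), GT.edge C X p q → E i p = E i q := by
    intro i p q h
    rw [hEval, hEval]
    have hiff : GT.sameTile C X (R i) p ↔ GT.sameTile C X (R i) q := by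
      constructor
      · intro hp; exact Relation.EqvGen.trans _ _ _ hp (Relation.EqvGen.rel _ _ h)
      · intro hq
        exact Relation.EqvGen.trans _ _ _ hq
          (Relation.EqvGen.symm _ _ (Relation.EqvGen.rel _ _ h))
    simp [hiff]
  -- the threshold ε₀
  set S : Finset (GT.Idx n × GT.Idx n) :=
    Finset.univ.filter (fun pq => X pq.2 < X pq.1) with hS
  set T : Finset ℝ := insert 1 (S.image fun pq => X pq.1 - X pq.2) with hT
  have hTne : T.Nonempty := ⟨1, Finset.mem_insert_self _ _⟩
  set ε₀ : ℝ := T.min' hTne with hε₀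
  have hε₀pos : 0 < ε₀ := by
    rw [hε₀, Finset.lt_min'_iff]
    intro b hb
    rw [hT, Finset.mem_insert] at hb
    rcases hb with rfl | hb
    · norm_num
    · obtain ⟨pq, hpq, rfl⟩ := Finset.mem_image.mp hb
      rw [hS, Finset.mem_filter] at hpq
      linarith [hpq.2]
  have hgap : ∀ pq : GT.Idx n × GT.Idx n, X pq.2 < X pq.1 → ε₀ ≤ X pq.1 - X pq.2 := by
    intro pq hpq
    apply Finset.min'_le
    rw [hT, Finset.mem_insert]
    right
    exact Finset.mem_image.mpr ⟨pq, by rw [hS, Finset.mem_filter]; exact ⟨Finset.mem_univ _, hpq⟩, rfl⟩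
  -- main perturbation fact
  have key : ∀ ε : ℝ, 0 < ε → ε ≤ ε₀ → ∀ i,
      X + ε • E i ∈ GT.PC C ∧ X - ε • E i ∈ GT.PC C := by
    intro ε hε hεle i
    constructor
    · intro pr hpr
      have hle := hX pr hpr
      simp only [Pi.add_apply, Pi.smul_apply, smul_eq_mul]
      rcases eq_or_lt_of_le hle with heq | hlt
      · have hEpq : E i pr.1 = E i pr.2 := hEeq i pr.1 pr.2 ⟨Or.inl hpr, heq.symm⟩
        rw [heq, hEpq]
      · have hg : ε₀ ≤ X pr.1 - X pr.2 := hgap pr hlt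
        have h1 : ε * E i pr.2 ≤ ε * 1 := mul_le_mul_of_nonneg_left (hEle1 i pr.2) hε.le
        have h2 : 0 ≤ ε * E i pr.1 := mul_nonneg hε.le (hEnn i pr.1)
        linarith
    · intro pr hpr
      have hle := hX pr hpr
      simp only [Pi.sub_apply, Pi.smul_apply, smul_eq_mul]
      rcases eq_or_lt_of_le hle with heq | hlt
      · have hEpq : E i pr.1 = E i pr.2 := hEeq i pr.1 pr.2 ⟨Or.inl hpr, heq.symm⟩
        rw [heq, hEpq]
      · have hg : ε₀ ≤ X pr.1 - X pr.2 := hgap pr hlt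
        have h1 : ε * E i pr.1 ≤ ε * 1 := mul_le_mul_of_nonneg_left (hEle1 i pr.1) hε.le
        have h2 : 0 ≤ ε * E i pr.2 := mul_nonneg hε.le (hEnn i pr.2)
        linarith
  -- evaluating E i at the representatives
  have hdiag : ∀ i j, E i (R j) = if i = j then (1:ℝ) else 0 := by
    intro i j
    rw [hEval]
    by_cases h : i = j
    · subst h
      rw [if_pos rfl, if_pos (show GT.sameTile C X (R i) (R i) from Relation.EqvGen.refl _)]
    · rw [if_neg (hR1 i j h), if_neg h]
  -- linear independence
  have hLI : LinearIndependent ℝ E := by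
    rw [linearIndependent_iff']
    intro s g hsum j hj
    have hfun := congrFun hsum (R j)
    simp only [Finset.sum_apply, Pi.smul_apply, smul_eq_mul, Pi.zero_apply] at hfun
    rw [Finset.sum_eq_single j (fun b _ hbj => by rw [hdiag b j, if_neg hbj, mul_zero])
      (fun h => absurd hj h)] at hfun
    rw [hdiag j j, if_pos rfl, mul_one] at hfun
    exact hfun
  refine ⟨⟨ε₀, hε₀pos, key⟩, hLI, ?_, ?_⟩
  · intro i
    obtain ⟨h1, h2⟩ := key ε₀ hε₀pos le_rfl i
    exact ⟨ε₀, hε₀pos, h1, h2⟩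
  · intro F hF
    obtain ⟨hface, hXF, _⟩ := hF
    have hmem : ∀ i, X + ε₀ • E i ∈ F ∧ X - ε₀ • E i ∈ F := by
      intro i
      obtain ⟨h1, h2⟩ := key ε₀ hε₀pos le_rfl i
      rcases hface with rfl | ⟨f, c, _, hfle, _, hFeq⟩
      · exact ⟨h1, h2⟩
      · rw [hFeq] at hXF ⊢
        obtain ⟨hXP, hfX⟩ := hXF
        have ha := hfle _ h1
        have hb := hfle _ h2
        have hsum : f (X + ε₀ • E i) + f (X - ε₀ • E i) = 2 * c := by
          rw [map_add, map_sub]; linarith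
        exact ⟨⟨h1, by linarith⟩, ⟨h2, by linarith⟩⟩
    have hdir : ∀ i, ε₀ • E i ∈ (affineSpan ℝ F).direction := by
      intro i
      have hv : (X + ε₀ • E i) -ᵥ X ∈ (affineSpan ℝ F).direction :=
        AffineSubspace.vsub_mem_direction (subset_affineSpan ℝ F (hmem i).1)
          (subset_affineSpan ℝ F hXF)
      simpa [vsub_eq_sub] using hv
    have hLI2 : LinearIndependent ℝ (fun i => ε₀ • E i) := by
      have h := hLI.units_smul (fun _ => Units.mk0 ε₀ (ne_of_gt hε₀pos))
      have heq : (fun i => ε₀ • E i)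
          = (fun _ : Fin d => Units.mk0 ε₀ (ne_of_gt hε₀pos)) • E := by
        funext i
        simp [Units.smul_def]
      rw [heq]
      exact h
    let b : Fin d → (affineSpan ℝ F).direction := fun i => ⟨ε₀ • E i, hdir i⟩
    have hb : LinearIndependent ℝ b :=
      LinearIndependent.of_comp (affineSpan ℝ F).direction.subtype hLI2
    have hcard := hb.fintype_card_le_finrank
    simpa [GT.faceDim] using hcard
end

section
/- Let C be a set of relations and X a C-pattern. The dimension of the minimal face of the polyhedron P_C containing X is equal to the number of tiles in the tiling M_C(X). -/
open scoped BigOperators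

namespace GTAux
open GT

variable {n : ℕ} (C : Rels n) (X : Pattern n)

/-- Candidate minimal face: pattern + equality on tight constraints. -/
def F0 : Set (Pattern n) :=
  {Y | IsPattern C Y ∧ ∀ pr ∈ C, X pr.1 = X pr.2 → Y pr.1 = Y pr.2}

/-- Direction subspace: equality on tight constraints. -/
def Wsub : Submodule ℝ (Pattern n) where
  carrier := {w | ∀ pr ∈ C, X pr.1 = X pr.2 → w pr.1 = w pr.2}
  add_mem' := by intro a b ha hb pr h1 h2; simp [ha pr h1 h2, hb pr h1 h2]
  zero_mem' := by intro pr h1 h2; rfl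
  smul_mem' := by intro c a ha pr h1 h2; simp [ha pr h1 h2]

variable {C X}

lemma eps_lemma (hX : IsPattern C X) {w : Pattern n}
    (hw : ∀ pr ∈ C, X pr.1 = X pr.2 → w pr.1 = w pr.2) :
    ∃ ε : ℝ, 0 < ε ∧ X + ε • w ∈ PC C ∧ X - ε • w ∈ PC C := by
  classical
  set s : Finset (Idx n × Idx n) := (Set.toFinite C).toFinset with hs
  have hmem : ∀ pr, pr ∈ s ↔ pr ∈ C := by
    intro pr; rw [hs, Set.Finite.mem_toFinset]
  set b : Idx n × Idx n → ℝ := fun pr =>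
    if X pr.1 = X pr.2 then 1 else (X pr.1 - X pr.2) / (|w pr.1 - w pr.2| + 1) with hb
  have hbpos : ∀ pr ∈ s, 0 < b pr := by
    intro pr hpr
    by_cases h : X pr.1 = X pr.2
    · simp [hb, h]
    · have h1 : X pr.2 ≤ X pr.1 := hX pr ((hmem pr).mp hpr)
      have h2 : X pr.2 < X pr.1 := lt_of_le_of_ne h1 (fun h' => h h'.symm)
      have : (0:ℝ) < |w pr.1 - w pr.2| + 1 := by positivity
      simp only [hb, if_neg h]
      exact div_pos (by linarith) this
  set ε : ℝ := if h : s.Nonempty then min 1 (s.inf' h b) else 1 with hε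
  have hεpos : 0 < ε := by
    by_cases h : s.Nonempty
    · simp only [hε, dif_pos h]
      exact lt_min one_pos ((Finset.lt_inf'_iff h).mpr (fun i hi => hbpos i hi))
    · simp [hε, dif_neg h]
  have hεle : ∀ pr ∈ s, ε ≤ b pr := by
    intro pr hpr
    have h : s.Nonempty := ⟨pr, hpr⟩
    simp only [hε, dif_pos h]
    exact le_trans (min_le_right _ _) (Finset.inf'_le b hpr)
  refine ⟨ε, hεpos, ?_, ?_⟩ <;>
  · intro pr hpr
    by_cases h : X pr.1 = X pr.2
    · have hww := hw pr hpr h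
      simp [Pi.add_apply, Pi.sub_apply, Pi.smul_apply, h, hww]
    · have key : ε * (|w pr.1 - w pr.2| + 1) ≤ X pr.1 - X pr.2 := by
        have h3 : (0:ℝ) < |w pr.1 - w pr.2| + 1 := by positivity
        have := hεle pr ((hmem pr).mpr hpr)
        rw [hb] at this
        simp only [if_neg h] at this
        exact (le_div_iff₀ h3).mp this
      have habs1 : w pr.1 - w pr.2 ≤ |w pr.1 - w pr.2| := le_abs_self _
      have habs2 : -(w pr.1 - w pr.2) ≤ |w pr.1 - w pr.2| := neg_le_abs _
      have hε0 : 0 ≤ ε := le_of_lt hεpos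
      simp only [Pi.add_apply, Pi.sub_apply, Pi.smul_apply, smul_eq_mul]
      nlinarith [mul_le_mul_of_nonneg_left habs1 hε0, mul_le_mul_of_nonneg_left habs2 hε0]

lemma X_mem_F0 (hX : IsPattern C X) : X ∈ F0 C X := ⟨hX, fun pr _ h => h⟩

lemma isFace_F0 (hX : IsPattern C X) : IsFace (PC C) (F0 C X) := by
  classical
  set T : Finset (Idx n × Idx n) :=
    (Set.toFinite {pr ∈ C | X pr.1 = X pr.2}).toFinset with hT
  have hTmem : ∀ pr, pr ∈ T ↔ pr ∈ C ∧ X pr.1 = X pr.2 := by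
    intro pr; rw [hT, Set.Finite.mem_toFinset]; exact Iff.rfl
  set f : Pattern n →ₗ[ℝ] ℝ :=
    ∑ pr ∈ T, ((LinearMap.proj pr.2 : Pattern n →ₗ[ℝ] ℝ) - LinearMap.proj pr.1) with hf
  have hfapp : ∀ Y : Pattern n, f Y = ∑ pr ∈ T, (Y pr.2 - Y pr.1) := by
    intro Y; simp [hf, LinearMap.sum_apply, LinearMap.sub_apply, Finset.sum_sub_distrib]
  have hterm : ∀ Y ∈ PC C, ∀ pr ∈ T, Y pr.2 - Y pr.1 ≤ 0 := by
    intro Y hY pr hpr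
    have := hY pr ((hTmem pr).mp hpr).1
    linarith
  have hfle : ∀ Y ∈ PC C, f Y ≤ 0 := by
    intro Y hY; rw [hfapp]; exact Finset.sum_nonpos (hterm Y hY)
  have hfX : f X = 0 := by
    rw [hfapp]
    refine Finset.sum_eq_zero ?_
    intro pr hpr
    have := ((hTmem pr).mp hpr).2
    linarith
  have hset : {Y ∈ PC C | f Y = 0} = F0 C X := by
    ext Y
    constructor
    · rintro ⟨hYP, hY0⟩
      refine ⟨hYP, ?_⟩
      intro pr hpr hXeq
      rw [hfapp] at hY0
      have := (Finset.sum_eq_zero_iff_of_nonpos (hterm Y hYP)).mp hY0 pr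
        ((hTmem pr).mpr ⟨hpr, hXeq⟩)
      linarith
    · rintro ⟨hYP, hYeq⟩
      refine ⟨hYP, ?_⟩
      rw [hfapp]
      refine Finset.sum_eq_zero ?_
      intro pr hpr
      obtain ⟨h1, h2⟩ := (hTmem pr).mp hpr
      have := hYeq pr h1 h2
      linarith
  by_cases hf0 : f = 0
  · left
    rw [← hset]
    ext Y
    simp [hf0]
  · right
    exact ⟨f, 0, hf0, hfle, ⟨X, hX, hfX⟩, hset.symm⟩

lemma F0_subset_face (hX : IsPattern C X) {F' : Set (Pattern n)}
    (hF' : IsFace (PC C) F') (hXF' : X ∈ F') : F0 C X ⊆ F' := by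
  rcases hF' with rfl | ⟨f, c, _, hle, _, rfl⟩
  · exact fun Y hY => hY.1
  · rintro Y ⟨hYP, hYeq⟩
    obtain ⟨hXP, hXc⟩ := hXF'
    have hw : ∀ pr ∈ C, X pr.1 = X pr.2 → (Y - X) pr.1 = (Y - X) pr.2 := by
      intro pr hpr h
      simp [Pi.sub_apply, h, hYeq pr hpr h]
    obtain ⟨ε, hεpos, h1, h2⟩ := eps_lemma hX hw
    have e1 : f (X + ε • (Y - X)) ≤ c := hle _ h1
    have e2 : f (X - ε • (Y - X)) ≤ c := hle _ h2
    rw [map_add, map_smul, hXc, smul_eq_mul] at e1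
    rw [map_sub, map_smul, hXc, smul_eq_mul] at e2
    have hfd : f (Y - X) = 0 := by
      rcases lt_trichotomy (f (Y - X)) 0 with h | h | h
      · nlinarith
      · exact h
      · nlinarith
    refine ⟨hYP, ?_⟩
    have := map_sub f Y X
    rw [hfd] at this
    linarith [this, hXc]

lemma F_eq_F0 (hX : IsPattern C X) {F : Set (Pattern n)}
    (hF : IsMinFace (PC C) F X) : F = F0 C X := by
  apply Set.Subset.antisymm
  · exact hF.2.2 _ (isFace_F0 hX) (X_mem_F0 hX)
  · rcases hF with ⟨hface, hXF, _⟩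
    exact F0_subset_face hX hface hXF

lemma direction_F0 (hX : IsPattern C X) :
    (affineSpan ℝ (F0 C X)).direction = Wsub C X := by
  apply le_antisymm
  · have h1 : affineSpan ℝ (F0 C X) ≤ AffineSubspace.mk' X (Wsub C X) := by
      apply affineSpan_le.mpr
      intro Y hY
      show Y ∈ AffineSubspace.mk' X (Wsub C X)
      rw [AffineSubspace.mem_mk']
      intro pr hpr h
      simp [vsub_eq_sub, Pi.sub_apply, h, hY.2 pr hpr h]
    calc (affineSpan ℝ (F0 C X)).direction
        ≤ (AffineSubspace.mk' X (Wsub C X)).direction :=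
          AffineSubspace.direction_le h1
      _ = Wsub C X := AffineSubspace.direction_mk' X _
  · intro w hw
    obtain ⟨ε, hεpos, h1, _⟩ := eps_lemma hX hw
    have hmem : X + ε • w ∈ F0 C X := by
      refine ⟨h1, ?_⟩
      intro pr hpr h
      simp [Pi.add_apply, Pi.smul_apply, h, hw pr hpr h]
    have hd : (X + ε • w) -ᵥ X ∈ (affineSpan ℝ (F0 C X)).direction :=
      AffineSubspace.vsub_mem_direction (subset_affineSpan ℝ _ hmem)
        (subset_affineSpan ℝ _ (X_mem_F0 hX))
    have hεw : ε • w ∈ (affineSpan ℝ (F0 C X)).direction := by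
      simpa [vsub_eq_sub] using hd
    have := Submodule.smul_mem _ ε⁻¹ hεw
    rwa [smul_smul, inv_mul_cancel₀ (ne_of_gt hεpos), one_smul] at this

lemma mem_Wsub_iff {w : Pattern n} :
    w ∈ Wsub C X ↔ ∀ p q, sameTile C X p q → w p = w q := by
  constructor
  · intro h p q hst
    induction hst with
    | rel p q hpq =>
      rcases hpq with ⟨hc | hc, hXeq⟩
      · exact h (p, q) hc hXeq
      · exact (h (q, p) hc hXeq.symm).symm
    | refl => rfl
    | symm _ _ _ ih => exact ih.symm
    | trans _ _ _ _ _ ih1 ih2 => exact ih1.trans ih2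
  · intro h pr hpr hXeq
    exact h pr.1 pr.2 (Relation.EqvGen.rel _ _ ⟨Or.inl hpr, hXeq⟩)

/-- Setoid from `sameTile`. -/
def st (C : Rels n) (X : Pattern n) : Setoid (Idx n) :=
  ⟨sameTile C X, Relation.EqvGen.is_equivalence _⟩

lemma tile_eq_of_sameTile {p q : Idx n} (h : sameTile C X p q) :
    tile C X p = tile C X q := by
  have equiv := Relation.EqvGen.is_equivalence (edge C X)
  ext r
  constructor
  · intro hr; exact equiv.trans (equiv.symm h) hr
  · intro hr; exact equiv.trans h hr

/-- Bijection between the quotient and the set of tiles. -/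
noncomputable def quotEquivTiles (C : Rels n) (X : Pattern n) :
    Quotient (st C X) ≃ tiles C X := by
  classical
  refine Equiv.ofBijective
    (Quotient.lift (fun p => (⟨tile C X p, p, rfl⟩ : tiles C X))
      (fun p q h => Subtype.ext (tile_eq_of_sameTile h))) ⟨?_, ?_⟩
  · rintro ⟨p⟩ ⟨q⟩ h
    apply Quotient.sound
    have h' : tile C X p = tile C X q := congrArg Subtype.val h
    have : q ∈ tile C X q := (Relation.EqvGen.is_equivalence (edge C X)).refl q
    rw [← h'] at this
    exact this
  · rintro ⟨T, p, rfl⟩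
    exact ⟨⟦p⟧, rfl⟩

/-- Linear equivalence between `Wsub` and functions on tiles. -/
noncomputable def wsubEquiv (C : Rels n) (X : Pattern n) :
    Wsub C X ≃ₗ[ℝ] (Quotient (st C X) → ℝ) where
  toFun w := Quotient.lift (fun p => w.1 p)
    (fun p q h => mem_Wsub_iff.mp w.2 p q h)
  map_add' a b := by ext ⟨p⟩; rfl
  map_smul' c a := by ext ⟨p⟩; rfl
  invFun f := ⟨fun p => f ⟦p⟧, by
    intro pr hpr hXeq
    have : sameTile C X pr.1 pr.2 := Relation.EqvGen.rel _ _ ⟨Or.inl hpr, hXeq⟩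
    simp only
    congr 1
    exact Quotient.sound this⟩
  left_inv a := by ext p; rfl
  right_inv f := by ext ⟨p⟩; rfl

lemma finrank_Wsub : Module.finrank ℝ (Wsub C X) = (tiles C X).ncard := by
  classical
  have : Fintype (Quotient (st C X)) := Fintype.ofFinite _
  rw [(wsubEquiv C X).finrank_eq,
    Module.finrank_fintype_fun_eq_card]
  rw [← Nat.card_coe_set_eq, ← Nat.card_congr (quotEquivTiles C X),
    Nat.card_eq_fintype_card]

end GTAux


/-- Theorem dimI (i): the dimension of the minimal face of `P_C`
containing `X` equals the number of tiles of `M_C(X)`. -/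
theorem stmt11 {n : ℕ} (C : GT.Rels n) (X : GT.Pattern n) (hX : GT.IsPattern C X)
    (F : Set (GT.Pattern n)) (hF : GT.IsMinFace (GT.PC C) F X) :
    GT.faceDim F = (GT.tiles C X).ncard := by
  rw [GTAux.F_eq_F0 hX hF]
  unfold GT.faceDim
  rw [GTAux.direction_F0 hX, GTAux.finrank_Wsub]
end

section
/- Let C be a set of relations, X a C-pattern, and λ = (x_{n1},...,x_{nn}). The dimension of the minimal face of P_C(λ) containing X equals the number of Λ1-free tiles of M_C(X) (tiles containing no vertex in row n). -/
open scoped BigOperators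

namespace GTaux

open GT

attribute [local instance] Classical.propDecidable

variable {n : ℕ}

/-- The candidate minimal face. -/
def F0 (C : Rels n) (X : Pattern n) (lam : Fin n → ℝ) : Set (Pattern n) :=
  {Y | IsPattern C Y ∧ (∀ pr ∈ C, X pr.1 = X pr.2 → Y pr.1 = Y pr.2) ∧
      ∀ p : Idx n, row p = n - 1 → Y p = lam p.val.2}

/-- The candidate direction space. -/
def W0 (C : Rels n) (X : Pattern n) : Submodule ℝ (Pattern n) where
  carrier := {y | (∀ p q : Idx n, edge C X p q → y p = y q) ∧
      ∀ p : Idx n, row p = n - 1 → y p = 0}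
  add_mem' := by
    rintro a b ⟨ha1, ha2⟩ ⟨hb1, hb2⟩
    exact ⟨fun p q h => by simp only [Pi.add_apply, ha1 p q h, hb1 p q h],
      fun p h => by simp only [Pi.add_apply, ha2 p h, hb2 p h, add_zero]⟩
  zero_mem' := ⟨fun _ _ _ => rfl, fun _ _ => rfl⟩
  smul_mem' := by
    rintro c a ⟨h1, h2⟩
    exact ⟨fun p q h => by simp only [Pi.smul_apply, h1 p q h],
      fun p h => by simp only [Pi.smul_apply, h2 p h, smul_zero]⟩

lemma mem_W0 {C : Rels n} {X : Pattern n} {y : Pattern n} :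
    y ∈ W0 C X ↔ (∀ p q : Idx n, edge C X p q → y p = y q) ∧
      ∀ p : Idx n, row p = n - 1 → y p = 0 := Iff.rfl

lemma W0_const {C : Rels n} {X : Pattern n} {y : Pattern n} (hy : y ∈ W0 C X)
    {p q : Idx n} (h : sameTile C X p q) : y p = y q := by
  induction h with
  | rel a b hab => exact hy.1 a b hab
  | refl => rfl
  | symm a b _ ih => exact ih.symm
  | trans a b c _ _ ih1 ih2 => exact ih1.trans ih2

lemma F0_sub_mem {C : Rels n} {X : Pattern n} {lam : Fin n → ℝ} {Y Y' : Pattern n}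
    (hY : Y ∈ F0 C X lam) (hY' : Y' ∈ F0 C X lam) : Y - Y' ∈ W0 C X := by
  constructor
  · rintro p q ⟨hpq | hqp, hXeq⟩
    · have h1 := hY.2.1 (p, q) hpq hXeq
      have h2 := hY'.2.1 (p, q) hpq hXeq
      simp only [Pi.sub_apply, h1, h2]
    · have h1 := hY.2.1 (q, p) hqp hXeq.symm
      have h2 := hY'.2.1 (q, p) hqp hXeq.symm
      simp only [Pi.sub_apply, h1, h2]
  · intro p hp
    simp only [Pi.sub_apply, hY.2.2 p hp, hY'.2.2 p hp, sub_self]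

lemma X_mem_F0 {C : Rels n} {X : Pattern n} {lam : Fin n → ℝ} (hX : IsPattern C X)
    (hlam : ∀ p : Idx n, row p = n - 1 → X p = lam p.val.2) : X ∈ F0 C X lam :=
  ⟨hX, fun _ _ h => h, hlam⟩

lemma F0_subset_PCl {C : Rels n} {X : Pattern n} {lam : Fin n → ℝ} :
    F0 C X lam ⊆ PCl C lam := fun _ hY => ⟨hY.1, hY.2.2⟩

/-- Perturbation lemma. -/
lemma pert {C : Rels n} {X : Pattern n} (hX : IsPattern C X) {lam : Fin n → ℝ}
    (hlam : ∀ p : Idx n, row p = n - 1 → X p = lam p.val.2)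
    {y : Pattern n} (hy : y ∈ W0 C X) :
    ∃ ε : ℝ, 0 < ε ∧ X + ε • y ∈ F0 C X lam ∧ X - ε • y ∈ F0 C X lam := by
  classical
  set d : Idx n × Idx n → ℝ := fun pr => |y pr.1 - y pr.2| with hd_def
  set e : Idx n × Idx n → ℝ := fun pr =>
    if pr ∈ C ∧ d pr ≠ 0 then (X pr.1 - X pr.2) / d pr else 1 with he_def
  have he_pos : ∀ pr : Idx n × Idx n, 0 < e pr := by
    intro pr
    simp only [he_def]
    split
    · next h =>
      obtain ⟨hprC, hdne⟩ := h
      have hXlt : X pr.2 < X pr.1 := by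
        rcases lt_or_eq_of_le (hX pr hprC) with h' | h'
        · exact h'
        · exfalso
          apply hdne
          have : y pr.1 = y pr.2 := hy.1 pr.1 pr.2 ⟨Or.inl (by simpa using hprC), h'.symm⟩
          simp [hd_def, this]
      exact div_pos (by linarith) (lt_of_le_of_ne (abs_nonneg _) (Ne.symm hdne))
    · exact one_pos
  obtain ⟨ε, hε0, hεe⟩ : ∃ ε : ℝ, 0 < ε ∧ ∀ pr : Idx n × Idx n, ε ≤ e pr := by
    rcases isEmpty_or_nonempty (Idx n × Idx n) with h | h
    · exact ⟨1, one_pos, fun pr => (h.false pr).elim⟩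
    · refine ⟨Finset.univ.inf' Finset.univ_nonempty e, ?_,
        fun pr => Finset.inf'_le _ (Finset.mem_univ _)⟩
      rw [Finset.lt_inf'_iff]
      exact fun pr _ => he_pos pr
  have main : ∀ t : ℝ, |t| ≤ ε → X + t • y ∈ F0 C X lam := by
    intro t ht
    refine ⟨?_, ?_, ?_⟩
    · intro pr hpr
      rcases lt_or_eq_of_le (hX pr hpr) with hlt | heq
      · by_cases hdz : d pr = 0
        · have hyeq : y pr.1 = y pr.2 := by
            have := abs_eq_zero.mp hdz
            linarith [sub_eq_zero.mp this]
          simp only [Pi.add_apply, Pi.smul_apply, smul_eq_mul, hyeq]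
          linarith
        · have he : e pr = (X pr.1 - X pr.2) / d pr := if_pos ⟨hpr, hdz⟩
          have h1 : ε ≤ (X pr.1 - X pr.2) / d pr := he ▸ hεe pr
          have hd0 : 0 < d pr := lt_of_le_of_ne (abs_nonneg _) (Ne.symm hdz)
          have h2 : ε * d pr ≤ X pr.1 - X pr.2 := by
            rw [← le_div_iff₀ hd0]; exact h1
          have h3 : t * (y pr.2 - y pr.1) ≤ |t| * d pr := by
            calc t * (y pr.2 - y pr.1) ≤ |t * (y pr.2 - y pr.1)| := le_abs_self _
            _ = |t| * |y pr.2 - y pr.1| := abs_mul _ _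
            _ = |t| * d pr := by rw [hd_def]; rw [abs_sub_comm]
          have h4 : |t| * d pr ≤ ε * d pr := mul_le_mul_of_nonneg_right ht (le_of_lt hd0)
          simp only [Pi.add_apply, Pi.smul_apply, smul_eq_mul]
          nlinarith
      · have hyeq : y pr.1 = y pr.2 :=
          hy.1 pr.1 pr.2 ⟨Or.inl (by simpa using hpr), heq.symm⟩
        simp only [Pi.add_apply, Pi.smul_apply, smul_eq_mul, hyeq, heq, le_refl]
    · intro pr hpr hXeq
      have hyeq : y pr.1 = y pr.2 := hy.1 pr.1 pr.2 ⟨Or.inl (by simpa using hpr), hXeq⟩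
      simp only [Pi.add_apply, Pi.smul_apply, smul_eq_mul, hyeq, hXeq]
    · intro p hp
      simp only [Pi.add_apply, Pi.smul_apply, smul_eq_mul, hy.2 p hp, mul_zero, add_zero]
      exact hlam p hp
  refine ⟨ε, hε0, main ε (by rw [abs_of_pos hε0]), ?_⟩
  have := main (-ε) (by rw [abs_neg, abs_of_pos hε0])
  rwa [neg_smul, ← sub_eq_add_neg] at this

lemma F0_isFace {C : Rels n} {X : Pattern n} {lam : Fin n → ℝ} (hX : IsPattern C X)
    (hlam : ∀ p : Idx n, row p = n - 1 → X p = lam p.val.2) :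
    IsFace (PCl C lam) (F0 C X lam) := by
  classical
  set T : Finset (Idx n × Idx n) :=
    Finset.univ.filter (fun pr => pr ∈ C ∧ X pr.1 = X pr.2) with hT
  set f : Pattern n →ₗ[ℝ] ℝ :=
    ∑ pr ∈ T, ((LinearMap.proj pr.2 : Pattern n →ₗ[ℝ] ℝ) - LinearMap.proj pr.1) with hf
  have hfval : ∀ x : Pattern n, f x = ∑ pr ∈ T, (x pr.2 - x pr.1) := by
    intro x
    rw [hf]
    simp [LinearMap.sum_apply, LinearMap.sub_apply, LinearMap.proj_apply]
  have hterm : ∀ x ∈ PCl C lam, ∀ pr ∈ T, x pr.2 - x pr.1 ≤ 0 := by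
    intro x hx pr hpr
    simp only [hT, Finset.mem_filter] at hpr
    have := hx.1 pr hpr.2.1
    linarith
  have hle : ∀ x ∈ PCl C lam, f x ≤ 0 := by
    intro x hx
    rw [hfval]
    exact Finset.sum_nonpos (hterm x hx)
  have hXmem : X ∈ PCl C lam := ⟨hX, hlam⟩
  have hfX : f X = 0 := by
    rw [hfval]
    apply Finset.sum_eq_zero
    intro pr hpr
    simp only [hT, Finset.mem_filter] at hpr
    rw [hpr.2.2]; ring
  have hchar : F0 C X lam = {x ∈ PCl C lam | f x = 0} := by
    ext x
    constructor
    · intro hx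
      refine ⟨F0_subset_PCl hx, ?_⟩
      rw [hfval]
      apply Finset.sum_eq_zero
      intro pr hpr
      simp only [hT, Finset.mem_filter] at hpr
      rw [hx.2.1 pr hpr.2.1 hpr.2.2]; ring
    · rintro ⟨hxP, hfx⟩
      refine ⟨hxP.1, ?_, hxP.2⟩
      intro pr hpr hXeq
      have hall := (Finset.sum_eq_zero_iff_of_nonpos (hterm x hxP)).mp
        (by rw [← hfval]; exact hfx) pr (by simp [hT, hpr, hXeq])
      linarith [hall]
  by_cases hf0 : f = 0
  · left
    rw [hchar]
    ext x
    simp [hf0]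
  · right
    exact ⟨f, 0, hf0, hle, ⟨X, hXmem, hfX⟩, hchar⟩

lemma F_eq_F0 {C : Rels n} {X : Pattern n} {lam : Fin n → ℝ} (hX : IsPattern C X)
    (hlam : ∀ p : Idx n, row p = n - 1 → X p = lam p.val.2)
    {F : Set (Pattern n)} (hF : IsMinFace (PCl C lam) F X) : F = F0 C X lam := by
  apply Set.Subset.antisymm
  · exact hF.2.2 _ (F0_isFace hX hlam) (X_mem_F0 hX hlam)
  · intro Y hY
    rcases hF.1 with rfl | ⟨f, c, -, hb, -, rfl⟩
    · exact F0_subset_PCl hY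
    · have hfX : f X = c := hF.2.1.2
      obtain ⟨ε, hε, h1, h2⟩ := pert hX hlam (F0_sub_mem hY (X_mem_F0 hX hlam))
      have hz1 : f (Y - X) ≤ 0 := by
        have hb1 := hb _ (F0_subset_PCl h1)
        rw [map_add, map_smul, smul_eq_mul, hfX] at hb1
        nlinarith
      have hz2 : 0 ≤ f (Y - X) := by
        have hb2 := hb _ (F0_subset_PCl h2)
        rw [map_sub, map_smul, smul_eq_mul, hfX] at hb2
        nlinarith
      refine ⟨F0_subset_PCl hY, ?_⟩
      have h0 : f (Y - X) = 0 := le_antisymm hz1 hz2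
      rw [map_sub] at h0
      linarith

lemma direction_F0 {C : Rels n} {X : Pattern n} {lam : Fin n → ℝ} (hX : IsPattern C X)
    (hlam : ∀ p : Idx n, row p = n - 1 → X p = lam p.val.2) :
    vectorSpan ℝ (F0 C X lam) = W0 C X := by
  apply le_antisymm
  · rw [vectorSpan_def]
    apply Submodule.span_le.mpr
    rintro v hv
    rw [Set.mem_vsub] at hv
    obtain ⟨a, ha, b, hb, rfl⟩ := hv
    rw [vsub_eq_sub]
    exact F0_sub_mem ha hb
  · intro y hy
    obtain ⟨ε, hε, h1, -⟩ := pert hX hlam hy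
    have hmem : (X + ε • y) -ᵥ X ∈ vectorSpan ℝ (F0 C X lam) :=
      vsub_mem_vectorSpan ℝ h1 (X_mem_F0 hX hlam)
    have hsm : ε • y ∈ vectorSpan ℝ (F0 C X lam) := by
      simpa [vsub_eq_sub, add_sub_cancel_left] using hmem
    have := Submodule.smul_mem _ ε⁻¹ hsm
    simpa [smul_smul, inv_mul_cancel₀ (ne_of_gt hε)] using this

/-- The setoid of the tiling. -/
def st (C : Rels n) (X : Pattern n) : Setoid (Idx n) :=
  Relation.EqvGen.setoid (edge C X)

lemma tile_eq {C : Rels n} {X : Pattern n} {p q : Idx n} (h : sameTile C X p q) :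
    tile C X p = tile C X q := by
  ext r
  constructor
  · intro hr
    exact Relation.EqvGen.trans _ _ _ (Relation.EqvGen.symm _ _ h) hr
  · intro hr
    exact Relation.EqvGen.trans _ _ _ h hr

lemma mem_tile_self (C : Rels n) (X : Pattern n) (p : Idx n) : p ∈ tile C X p :=
  Relation.EqvGen.refl p

lemma sameTile_out (C : Rels n) (X : Pattern n) (p : Idx n) :
    sameTile C X (Quotient.mk (st C X) p).out p :=
  Quotient.mk_out (s := st C X) p

lemma tile_out (C : Rels n) (X : Pattern n) (p : Idx n) :
    tile C X (Quotient.mk (st C X) p).out = tile C X p :=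
  tile_eq (sameTile_out C X p)

noncomputable def psi (C : Rels n) (X : Pattern n)
    (g : {c : Quotient (st C X) // L1free (tile C X c.out)} → ℝ) : Pattern n := fun p =>
  if h : L1free (tile C X (Quotient.mk (st C X) p).out)
  then g ⟨Quotient.mk (st C X) p, h⟩ else 0

lemma psi_mem (C : Rels n) (X : Pattern n)
    (g : {c : Quotient (st C X) // L1free (tile C X c.out)} → ℝ) :
    psi C X g ∈ W0 C X := by
  constructor
  · intro p q h
    have hmk : Quotient.mk (st C X) p = Quotient.mk (st C X) q :=
      Quotient.sound (Relation.EqvGen.rel p q h)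
    simp only [psi, hmk]
  · intro p hp
    have hnot : ¬ L1free (tile C X (Quotient.mk (st C X) p).out) := by
      rw [tile_out]
      intro hfree
      exact hfree p (mem_tile_self C X p) hp
    simp only [psi, dif_neg hnot]

noncomputable def tileEquiv (C : Rels n) (X : Pattern n) :
    W0 C X ≃ₗ[ℝ] ({c : Quotient (st C X) // L1free (tile C X c.out)} → ℝ) where
  toFun y c := (y : Pattern n) c.val.out
  map_add' y z := rfl
  map_smul' t y := rfl
  invFun g := ⟨psi C X g, psi_mem C X g⟩
  left_inv := by
    rintro ⟨y, hy⟩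
    apply Subtype.ext
    funext p
    show psi C X (fun c => y c.val.out) p = y p
    simp only [psi]
    split
    · next h =>
      exact W0_const hy (sameTile_out C X p)
    · next h =>
      rw [tile_out] at h
      simp only [L1free] at h
      push_neg at h
      obtain ⟨q, hq, hrow⟩ := h
      have h1 : y p = y q := W0_const hy hq
      have h2 : y q = 0 := hy.2 q hrow
      rw [h1, h2]
  right_inv := by
    intro g
    funext c
    obtain ⟨cv, hc⟩ := c
    show psi C X g cv.out = _
    have key : Quotient.mk (st C X) cv.out = cv := Quotient.out_eq cv
    have h' : L1free (tile C X (Quotient.mk (st C X) cv.out).out) := by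
      rw [key]; exact hc
    simp only [psi]
    rw [dif_pos h']
    congr 1
    exact Subtype.ext key

lemma finrank_W0 (C : Rels n) (X : Pattern n) :
    Module.finrank ℝ (W0 C X) = {T ∈ tiles C X | L1free T}.ncard := by
  classical
  haveI : Finite (Quotient (st C X)) := Quotient.finite _
  haveI : Fintype {c : Quotient (st C X) // L1free (tile C X c.out)} := Fintype.ofFinite _
  rw [(tileEquiv C X).finrank_eq, Module.finrank_pi]
  have himg : {T ∈ tiles C X | L1free T} =
      (fun c : Quotient (st C X) => tile C X c.out) ''
        {c : Quotient (st C X) | L1free (tile C X c.out)} := by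
    ext T
    constructor
    · rintro ⟨⟨p, rfl⟩, hT⟩
      refine ⟨Quotient.mk (st C X) p, ?_, ?_⟩
      · show L1free (tile C X _)
        rw [tile_out]
        exact hT
      · exact tile_out C X p
    · rintro ⟨c, hc, rfl⟩
      exact ⟨⟨c.out, rfl⟩, hc⟩
  have hinj : Set.InjOn (fun c : Quotient (st C X) => tile C X c.out)
      {c : Quotient (st C X) | L1free (tile C X c.out)} := by
    intro a _ b _ hab
    have hmem : b.out ∈ tile C X a.out := by
      simp only at hab
      rw [hab]
      exact mem_tile_self C X b.out
    calc a = Quotient.mk (st C X) a.out := (Quotient.out_eq a).symm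
    _ = Quotient.mk (st C X) b.out := Quotient.sound hmem
    _ = b := Quotient.out_eq b
  rw [himg, Set.ncard_image_of_injOn hinj, ← Nat.card_coe_set_eq,
    ← Nat.card_eq_fintype_card]
  rfl

end GTaux


/-- Theorem dimI (ii): the dimension of the minimal face of
`P_C(λ)` containing `X` equals the number of `Λ₁`-free tiles of `M_C(X)`. -/
theorem stmt12 {n : ℕ} (C : GT.Rels n) (X : GT.Pattern n) (hX : GT.IsPattern C X)
    (lam : Fin n → ℝ)
    (hlam : ∀ p : GT.Idx n, GT.row p = n - 1 → X p = lam p.val.2)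
    (F : Set (GT.Pattern n)) (hF : GT.IsMinFace (GT.PCl C lam) F X) :
    GT.faceDim F = {T ∈ GT.tiles C X | GT.L1free T}.ncard := by
  rw [GTaux.F_eq_F0 hX hlam hF]
  unfold GT.faceDim
  rw [direction_affineSpan, GTaux.direction_F0 hX hlam, GTaux.finrank_W0]
end

section
/- Let C be a set of relations, X a C-pattern, λ = (x_{n1},...,x_{nn}), μ = (w_1(X),...,w_n(X)). The dimension of the minimal face of P_C(λ,μ) containing X equals the dimension of the kernel of the tiling matrix A_{M_C(X)}. -/
open scoped BigOperators

/-!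
The direction space of the minimal face of `P_C(λ,μ)` at `X` is `tileSpace C X`: patterns that
are constant on the tiles of `M_C(X)`, vanish on the top row and have all row sums zero. Each
relation tight at `X` cuts out a face containing `X`, so points of the minimal face are constant
on tiles, while for `D` in `tileSpace C X` both `X ± tD` lie in `P_C(λ,μ)` for small `t ≠ 0`.
Such a `D` vanishes on the tiles meeting the top row, hence is `∑ₖ vₖ 1_{M_k}` for a unique `v`,
and its row sums in rows `1, …, n-1` are the entries of `A v`; so `tileSpace C X ≅ ker A`.
-/

open Filter Topology

namespace GT

section Faces

variable {E : Type*} [AddCommGroup E] [Module ℝ E] {P F : Set E} {x : E}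

theorem IsFace.subset (hF : IsFace P F) : F ⊆ P := by
  rcases hF with rfl | ⟨f, c, -, -, -, rfl⟩
  · exact subset_rfl
  · exact fun _ hy => hy.1

theorem IsFace.add_mem (hF : IsFace P F) (hx : x ∈ F) {v : E} (hadd : x + v ∈ P)
    (hsub : x - v ∈ P) : x + v ∈ F := by
  rcases hF with rfl | ⟨f, c, -, hle, -, rfl⟩
  · exact hadd
  · obtain ⟨-, hfx⟩ := hx
    have h₁ := hle _ hadd
    have h₂ := hle _ hsub
    rw [map_add, hfx] at h₁
    rw [map_sub, hfx] at h₂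
    exact ⟨hadd, by rw [map_add, hfx]; linarith⟩

theorem IsMinFace.apply_eq (hF : IsMinFace P F x) {f : E →ₗ[ℝ] ℝ} {c : ℝ}
    (hle : ∀ y ∈ P, f y ≤ c) (hfx : f x = c) {y : E} (hy : y ∈ F) : f y = c := by
  by_cases hf : f = 0
  · subst hf
    exact hfx
  · have hxP := hF.1.subset hF.2.1
    exact (hF.2.2 _ (Or.inr ⟨f, c, hf, hle, ⟨x, hxP, hfx⟩, rfl⟩) ⟨hxP, hfx⟩ hy).2

theorem IsFace.direction_affineSpan_eq (hF : IsFace P F) (hx : x ∈ F) (W : Submodule ℝ E)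
    (hsub : ∀ y ∈ F, y - x ∈ W) (hmem : ∀ v ∈ W, ∃ t : ℝ, t ≠ 0 ∧ x + t • v ∈ P ∧ x - t • v ∈ P) :
    (affineSpan ℝ F).direction = W := by
  rw [direction_affineSpan, vectorSpan_eq_span_vsub_set_right ℝ hx]
  refine le_antisymm (Submodule.span_le.2 ?_) fun v hv => ?_
  · rintro _ ⟨y, hy, rfl⟩
    exact hsub y hy
  · obtain ⟨t, ht, hadd, hsub⟩ := hmem v hv
    have htv : t • v ∈ Submodule.span ℝ ((· -ᵥ x) '' F) :=
      Submodule.subset_span ⟨x + t • v, hF.add_mem hx hadd hsub, by simp⟩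
    simpa [smul_smul, ht] using Submodule.smul_mem _ t⁻¹ htv

end Faces

variable {n : ℕ}

section Tiles

variable {C : Rels n} {X : Pattern n}

theorem sameTile.apply_eq {α : Type*} {f : Idx n → α} (hf : ∀ p q, edge C X p q → f p = f q)
    {p q : Idx n} (hpq : sameTile C X p q) : f p = f q :=
  (InvImage.equivalence (· = ·) f eq_equivalence).eqvGen_iff.1 (hpq.mono hf)

theorem eq_tile_of_mem {T : Set (Idx n)} (hT : T ∈ tiles C X) {p : Idx n} (hp : p ∈ T) :
    T = tile C X p := by
  obtain ⟨r, rfl⟩ := hT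
  ext q
  exact ⟨fun hq => Relation.EqvGen.trans _ _ _ (Relation.EqvGen.symm _ _ hp) hq,
    fun hq => Relation.EqvGen.trans _ _ _ hp hq⟩

theorem mem_tile_self (p : Idx n) : p ∈ tile C X p := Relation.EqvGen.refl p

theorem mem_tiles_iff_of_sameTile {T : Set (Idx n)} (hT : T ∈ tiles C X) {p q : Idx n}
    (hpq : sameTile C X p q) : p ∈ T ↔ q ∈ T := by
  obtain ⟨r, rfl⟩ := hT
  exact ⟨fun hp => Relation.EqvGen.trans _ _ _ hp hpq,
    fun hq => Relation.EqvGen.trans _ _ _ hq (Relation.EqvGen.symm _ _ hpq)⟩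

theorem eq_of_mem_of_mem_tiles {T T' : Set (Idx n)} (hT : T ∈ tiles C X) (hT' : T' ∈ tiles C X)
    {p : Idx n} (hp : p ∈ T) (hp' : p ∈ T') : T = T' :=
  (eq_tile_of_mem hT hp).trans (eq_tile_of_mem hT' hp').symm

theorem nonempty_of_mem_tiles {T : Set (Idx n)} (hT : T ∈ tiles C X) : T.Nonempty := by
  obtain ⟨p, rfl⟩ := hT
  exact ⟨p, mem_tile_self p⟩

end Tiles

section RowSums

theorem Rk_eq_sum (D : Pattern n) (k : Fin n) : Rk D k = ∑ p with row p = k.val, D p := by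
  rw [Rk, ← Finset.sum_filter_add_sum_filter_not Finset.univ (· ≤ k),
    Finset.sum_eq_zero (s := Finset.univ.filter (¬ · ≤ k)) fun j hj => dif_neg (by simpa using hj),
    add_zero]
  have hrow : ∀ p ∈ Finset.univ.filter (row · = k.val), p.val.1 = k :=
    fun p hp => Fin.ext (Finset.mem_filter.1 hp).2
  exact Finset.sum_bij' (fun j hj => ⟨(k, j), (Finset.mem_filter.1 hj).2⟩) (fun p _ => p.val.2)
    (fun _ _ => Finset.mem_filter.2 ⟨Finset.mem_univ _, rfl⟩)
    (fun p hp => by simpa [← hrow p hp] using p.2) (fun _ _ => rfl)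
    (fun p hp => Subtype.ext (Prod.ext (hrow p hp).symm rfl))
    (fun j hj => dif_pos (Finset.mem_filter.1 hj).2)

def rowSum (k : Fin n) : Pattern n →ₗ[ℝ] ℝ where
  toFun D := Rk D k
  map_add' D D' := by simp only [Rk_eq_sum, Pi.add_apply, Finset.sum_add_distrib]
  map_smul' c D := by simp only [Rk_eq_sum, Pi.smul_apply, smul_eq_mul, Finset.mul_sum,
    RingHom.id_apply]

theorem rowSum_apply (k : Fin n) (D : Pattern n) : rowSum k D = Rk D k := rfl

theorem Rk_add (D D' : Pattern n) (k : Fin n) : Rk (D + D') k = Rk D k + Rk D' k :=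
  map_add (rowSum k) D D'

theorem Rk_sub (D D' : Pattern n) (k : Fin n) : Rk (D - D') k = Rk D k - Rk D' k :=
  map_sub (rowSum k) D D'

theorem Rk_smul (c : ℝ) (D : Pattern n) (k : Fin n) : Rk (c • D) k = c * Rk D k :=
  map_smul (rowSum k) c D

theorem Rk_eq_zero_of_row_eq_zero {D : Pattern n} {k : Fin n}
    (hD : ∀ p : Idx n, row p = k.val → D p = 0) : Rk D k = 0 := by
  rw [Rk_eq_sum]
  exact Finset.sum_eq_zero fun p hp => hD p (Finset.mem_filter.1 hp).2

theorem wk_eq_of_Rk_eq {Y Z : Pattern n} (h : ∀ k, Rk Y k = Rk Z k) (k : Fin n) :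
    wk Y k = wk Z k := by
  simp only [wk, h]

theorem Rk_eq_of_wk_eq {Y Z : Pattern n} (h : ∀ k, wk Y k = wk Z k) (k : Fin n) :
    Rk Y k = Rk Z k := by
  obtain ⟨m, hm⟩ := k
  induction m with
  | zero =>
    simpa [wk] using h ⟨0, hm⟩
  | succ m ih =>
    have := h ⟨m + 1, hm⟩
    simp only [wk, Nat.add_sub_cancel, dif_pos m.succ_pos] at this
    linarith [ih (by omega)]

end RowSums

section TileSpace

variable {C : Rels n} {X : Pattern n}

def tileSpace (C : Rels n) (X : Pattern n) : Submodule ℝ (Pattern n) where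
  carrier := {D | (∀ p q, sameTile C X p q → D p = D q) ∧
    (∀ p, row p = n - 1 → D p = 0) ∧ ∀ k, Rk D k = 0}
  add_mem' := by
    rintro D D' ⟨hD₁, hD₂, hD₃⟩ ⟨hD₁', hD₂', hD₃'⟩
    exact ⟨fun p q h => by simp only [Pi.add_apply, hD₁ p q h, hD₁' p q h],
      fun p h => by simp only [Pi.add_apply, hD₂ p h, hD₂' p h, add_zero],
      fun k => by rw [Rk_add, hD₃, hD₃', add_zero]⟩
  zero_mem' := ⟨fun _ _ _ => rfl, fun _ _ => rfl, fun _ => Rk_eq_zero_of_row_eq_zero fun _ _ => rfl⟩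
  smul_mem' := by
    rintro c D ⟨hD₁, hD₂, hD₃⟩
    exact ⟨fun p q h => by simp only [Pi.smul_apply, hD₁ p q h],
      fun p h => by simp only [Pi.smul_apply, hD₂ p h, smul_zero],
      fun k => by rw [Rk_smul, hD₃, mul_zero]⟩

theorem eventually_isPattern_add_smul (hX : IsPattern C X) {D : Pattern n}
    (hD : ∀ pr ∈ C, X pr.1 = X pr.2 → D pr.1 = D pr.2) :
    ∀ᶠ t in 𝓝 (0 : ℝ), IsPattern C (X + t • D) := by
  have hcont (p : Idx n) : Continuous fun t : ℝ => (X + t • D) p := by fun_prop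
  refine Filter.eventually_all.2 fun pr => ?_
  by_cases hpr : pr ∈ C
  · rcases (hX pr hpr).eq_or_lt with htight | hslack
    · exact Filter.Eventually.of_forall fun t _ => by
        simp [htight, hD pr hpr htight.symm]
    · exact ((hcont pr.2).continuousAt.eventually_lt (hcont pr.1).continuousAt
        (by simpa using hslack)).mono fun t ht _ => ht.le
  · exact Filter.Eventually.of_forall fun t h => absurd h hpr

theorem add_mem_PClm {lam mu : Fin n → ℝ} (hXP : X ∈ PClm C lam mu) {D : Pattern n}
    (hD : D ∈ tileSpace C X) (hXD : IsPattern C (X + D)) : X + D ∈ PClm C lam mu := by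
  obtain ⟨-, hD₂, hD₃⟩ := hD
  refine ⟨⟨hXD, fun p hp => ?_⟩, fun k => ?_⟩
  · simp [hD₂ p hp, hXP.1.2 p hp]
  · rw [← hXP.2 k]
    exact wk_eq_of_Rk_eq (fun j => by rw [Rk_add, hD₃, add_zero]) k

theorem exists_add_sub_smul_mem_PClm {lam mu : Fin n → ℝ} (hXP : X ∈ PClm C lam mu)
    {D : Pattern n} (hD : D ∈ tileSpace C X) :
    ∃ t : ℝ, t ≠ 0 ∧ X + t • D ∈ PClm C lam mu ∧ X - t • D ∈ PClm C lam mu := by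
  have hpat := eventually_isPattern_add_smul hXP.1.1 fun pr hpr htight =>
    hD.1 _ _ (Relation.EqvGen.rel _ _ ⟨Or.inl hpr, htight⟩)
  have hpat' := (continuous_neg.tendsto' (0 : ℝ) 0 neg_zero).eventually hpat
  obtain ⟨t, ⟨hplus, hminus⟩, ht⟩ :=
    (((hpat.and hpat').filter_mono nhdsWithin_le_nhds).and
      (self_mem_nhdsWithin (s := {0}ᶜ) (a := (0 : ℝ)))).exists
  refine ⟨t, ht, add_mem_PClm hXP (Submodule.smul_mem _ _ hD) hplus, ?_⟩
  rw [sub_eq_add_neg, ← neg_smul]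
  exact add_mem_PClm hXP (Submodule.smul_mem _ _ hD) hminus

theorem IsMinFace.apply_eq_of_mem {lam mu : Fin n → ℝ} {F : Set (Pattern n)}
    (hF : IsMinFace (PClm C lam mu) F X) {p q : Idx n} (hpq : (p, q) ∈ C) (htight : X p = X q)
    {Y : Pattern n} (hY : Y ∈ F) : Y p = Y q := by
  have key := hF.apply_eq (f := (LinearMap.proj q : Pattern n →ₗ[ℝ] ℝ) - LinearMap.proj p) (c := 0)
    (fun Z hZ => by simpa using hZ.1.1 _ hpq) (by simp [htight]) hY
  simp only [LinearMap.sub_apply, LinearMap.proj_apply] at key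
  linarith

theorem IsMinFace.apply_eq_of_sameTile {lam mu : Fin n → ℝ} {F : Set (Pattern n)}
    (hF : IsMinFace (PClm C lam mu) F X) {Y : Pattern n} (hY : Y ∈ F) {p q : Idx n}
    (hpq : sameTile C X p q) : Y p = Y q := by
  refine hpq.apply_eq ?_
  rintro p q ⟨hpq | hqp, htight⟩
  · exact hF.apply_eq_of_mem hpq htight hY
  · exact (hF.apply_eq_of_mem hqp htight.symm hY).symm

theorem IsMinFace.sub_mem_tileSpace {lam mu : Fin n → ℝ} {F : Set (Pattern n)}
    (hF : IsMinFace (PClm C lam mu) F X) {Y : Pattern n} (hY : Y ∈ F) : Y - X ∈ tileSpace C X := by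
  have hYP := hF.1.subset hY
  have hXP := hF.1.subset hF.2.1
  refine ⟨fun p q hpq => ?_, fun p hp => ?_, fun k => ?_⟩
  · simp only [Pi.sub_apply, hF.apply_eq_of_sameTile hY hpq, hF.apply_eq_of_sameTile hF.2.1 hpq]
  · simp [hYP.1.2 p hp, hXP.1.2 p hp]
  · rw [Rk_sub, Rk_eq_of_wk_eq (fun j => (hYP.2 j).trans (hXP.2 j).symm), sub_self]

end TileSpace

section IndicatorCombination

variable {s : ℕ} (M : Fin s → Set (Idx n))

noncomputable def indicatorCombination : (Fin s → ℝ) →ₗ[ℝ] Pattern n :=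
  Fintype.linearCombination ℝ fun k => (M k).indicator 1

variable {M}

theorem indicatorCombination_apply (v : Fin s → ℝ) (p : Idx n) :
    indicatorCombination M v p = ∑ k, (M k).indicator (fun _ => v k) p := by
  classical
  simp [indicatorCombination, Fintype.linearCombination_apply, Set.indicator_apply]

theorem indicatorCombination_apply_of_mem (hdisj : ∀ p k k', p ∈ M k → p ∈ M k' → k = k')
    (v : Fin s → ℝ) {p : Idx n} {k : Fin s} (hp : p ∈ M k) : indicatorCombination M v p = v k := by
  rw [indicatorCombination_apply, Finset.sum_eq_single k
    (fun k' _ hk' => Set.indicator_of_notMem (fun hp' => hk' (hdisj p k' k hp' hp)) _)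
    (fun h => absurd (Finset.mem_univ k) h), Set.indicator_of_mem hp]

theorem indicatorCombination_apply_of_forall_notMem (v : Fin s → ℝ) {p : Idx n}
    (hp : ∀ k, p ∉ M k) : indicatorCombination M v p = 0 := by
  rw [indicatorCombination_apply]
  exact Finset.sum_eq_zero fun k _ => Set.indicator_of_notMem (hp k) _

theorem indicatorCombination_apply_congr (v : Fin s → ℝ) {p q : Idx n}
    (hpq : ∀ k, p ∈ M k ↔ q ∈ M k) : indicatorCombination M v p = indicatorCombination M v q := by
  classical
  simp only [indicatorCombination_apply, Set.indicator_apply, hpq]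

theorem indicatorCombination_injective (hne : ∀ k, (M k).Nonempty)
    (hdisj : ∀ p k k', p ∈ M k → p ∈ M k' → k = k') :
    Function.Injective (indicatorCombination M) := by
  intro v w hvw
  funext k
  obtain ⟨p, hp⟩ := hne k
  rw [← indicatorCombination_apply_of_mem hdisj v hp,
    ← indicatorCombination_apply_of_mem hdisj w hp, hvw]

theorem Rk_indicator_one (T : Set (Idx n)) (i : Fin n) :
    Rk (T.indicator 1) i = ({p | row p = i.val ∧ p ∈ T}.ncard : ℝ) := by
  classical
  rw [Rk_eq_sum, Finset.sum_indicator_eq_sum_filter, Finset.filter_filter, Pi.one_def,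
    Finset.sum_const, nsmul_one, ← Set.ncard_coe_finset]
  congr
  ext p
  simp

theorem Rk_indicatorCombination (v : Fin s → ℝ) (i : Fin n) :
    Rk (indicatorCombination M v) i =
      ∑ k, ({p | row p = i.val ∧ p ∈ M k}.ncard : ℝ) * v k := by
  rw [← rowSum_apply, indicatorCombination, Fintype.linearCombination_apply, map_sum]
  simp only [map_smul, rowSum_apply, Rk_indicator_one, smul_eq_mul, mul_comm]

end IndicatorCombination

section TilingMatrix

open scoped Matrix

variable {C : Rels n} {X : Pattern n} {s : ℕ} {M : Fin s → Set (Idx n)}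

theorem mulVec_eq_Rk_indicatorCombination {A : Matrix (Fin (n - 1)) (Fin s) ℝ}
    (hA : ∀ i k, A i k = ({p : Idx n | row p = i.val ∧ p ∈ M k}.ncard : ℝ)) (v : Fin s → ℝ)
    (i : Fin (n - 1)) : (A *ᵥ v) i = Rk (indicatorCombination M v) ⟨i, by omega⟩ := by
  simp only [Rk_indicatorCombination, Matrix.mulVec, dotProduct, hA]

theorem exists_indicatorCombination_eq (hM : ∀ k, M k ∈ tiles C X ∧ L1free (M k))
    (hMall : ∀ T ∈ tiles C X, L1free T → ∃ k, T = M k)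
    (hdisj : ∀ p k k', p ∈ M k → p ∈ M k' → k = k') {D : Pattern n}
    (hD₁ : ∀ p q, sameTile C X p q → D p = D q) (hD₂ : ∀ p, row p = n - 1 → D p = 0) :
    ∃ v, indicatorCombination M v = D := by
  choose pt hpt using fun k => nonempty_of_mem_tiles (hM k).1
  refine ⟨fun k => D (pt k), funext fun p => ?_⟩
  by_cases hp : ∃ k, p ∈ M k
  · obtain ⟨k, hk⟩ := hp
    rw [indicatorCombination_apply_of_mem hdisj _ hk]
    exact hD₁ _ _ (show p ∈ tile C X (pt k) from eq_tile_of_mem (hM k).1 (hpt k) ▸ hk)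
  · simp only [not_exists] at hp
    rw [indicatorCombination_apply_of_forall_notMem _ hp]
    have hfree : ¬ L1free (tile C X p) := fun hfree => by
      obtain ⟨k, hk⟩ := hMall _ ⟨p, rfl⟩ hfree
      exact hp k (hk ▸ mem_tile_self p)
    simp only [L1free, not_forall, not_not] at hfree
    obtain ⟨q, hq, hrow⟩ := hfree
    rw [hD₁ p q hq, hD₂ q hrow]

theorem indicatorCombination_mem_tileSpace_iff (hM : ∀ k, M k ∈ tiles C X ∧ L1free (M k))
    {A : Matrix (Fin (n - 1)) (Fin s) ℝ}
    (hA : ∀ i k, A i k = ({p : Idx n | row p = i.val ∧ p ∈ M k}.ncard : ℝ)) (v : Fin s → ℝ) :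
    indicatorCombination M v ∈ tileSpace C X ↔ A *ᵥ v = 0 := by
  have htop : ∀ p, row p = n - 1 → indicatorCombination M v p = 0 := fun p hp =>
    indicatorCombination_apply_of_forall_notMem _ fun k hk => (hM k).2 p hk hp
  constructor
  · rintro ⟨-, -, hRk⟩
    funext i
    rw [mulVec_eq_Rk_indicatorCombination hA, hRk, Pi.zero_apply]
  · intro hv
    refine ⟨fun p q hpq => indicatorCombination_apply_congr _ fun k =>
      mem_tiles_iff_of_sameTile (hM k).1 hpq, htop, fun k => ?_⟩
    by_cases hk : k.val = n - 1
    · exact Rk_eq_zero_of_row_eq_zero fun p hp => htop p (hp.trans hk)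
    · exact (mulVec_eq_Rk_indicatorCombination hA v ⟨k.val, by omega⟩).symm.trans (congrFun hv _)

theorem tileSpace_eq_map_ker (hM : ∀ k, M k ∈ tiles C X ∧ L1free (M k))
    (hMall : ∀ T ∈ tiles C X, L1free T → ∃ k, T = M k)
    (hdisj : ∀ p k k', p ∈ M k → p ∈ M k' → k = k') {A : Matrix (Fin (n - 1)) (Fin s) ℝ}
    (hA : ∀ i k, A i k = ({p : Idx n | row p = i.val ∧ p ∈ M k}.ncard : ℝ)) :
    tileSpace C X = (LinearMap.ker A.mulVecLin).map (indicatorCombination M) := by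
  ext D
  constructor
  · intro hD
    obtain ⟨v, rfl⟩ := exists_indicatorCombination_eq hM hMall hdisj hD.1 hD.2.1
    exact ⟨v, (indicatorCombination_mem_tileSpace_iff hM hA v).1 hD, rfl⟩
  · rintro ⟨v, hv, rfl⟩
    exact (indicatorCombination_mem_tileSpace_iff hM hA v).2 hv

end TilingMatrix

end GT

theorem stmt13_general {n : ℕ} (C : GT.Rels n) (X : GT.Pattern n)
    (lam mu : Fin n → ℝ)
    (s : ℕ) (M : Fin s → Set (GT.Idx n)) (hMinj : Function.Injective M)
    (hM : ∀ k, M k ∈ GT.tiles C X ∧ GT.L1free (M k))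
    (hMall : ∀ T ∈ GT.tiles C X, GT.L1free T → ∃ k, T = M k)
    (A : Matrix (Fin (n - 1)) (Fin s) ℝ)
    (hA : ∀ i k, A i k = ({p : GT.Idx n | GT.row p = i.val ∧ p ∈ M k}.ncard : ℝ))
    (F : Set (GT.Pattern n)) (hF : GT.IsMinFace (GT.PClm C lam mu) F X) :
    GT.faceDim F = Module.finrank ℝ (LinearMap.ker A.mulVecLin) := by
  have hXP : X ∈ GT.PClm C lam mu := hF.1.subset hF.2.1
  have hdisj : ∀ p k k', p ∈ M k → p ∈ M k' → k = k' := fun p k k' hk hk' =>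
    hMinj (GT.eq_of_mem_of_mem_tiles (hM k).1 (hM k').1 hk hk')
  have hdir : (affineSpan ℝ F).direction = GT.tileSpace C X :=
    hF.1.direction_affineSpan_eq hF.2.1 _ (fun Y hY => hF.sub_mem_tileSpace hY)
      fun D hD => GT.exists_add_sub_smul_mem_PClm hXP hD
  have hinj := GT.indicatorCombination_injective (fun k => GT.nonempty_of_mem_tiles (hM k).1) hdisj
  rw [GT.faceDim, hdir, GT.tileSpace_eq_map_ker hM hMall hdisj hA]
  exact ((LinearMap.ker A.mulVecLin).equivMapOfInjective _ hinj).finrank_eq.symm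

/-- Theorem dimI (iii): the dimension of the minimal face of
`P_C(λ,μ)` containing `X` equals the dimension of the kernel of the tiling
matrix `A_{M_C(X)}` (rows indexed by paper rows `1,…,n-1`, columns by the
`Λ₁`-free tiles `M_1,…,M_s`). -/
theorem stmt13 {n : ℕ} (C : GT.Rels n) (X : GT.Pattern n) (hX : GT.IsPattern C X)
    (lam mu : Fin n → ℝ)
    (hlam : ∀ p : GT.Idx n, GT.row p = n - 1 → X p = lam p.val.2)
    (hmu : ∀ k : Fin n, GT.wk X k = mu k)
    (s : ℕ) (M : Fin s → Set (GT.Idx n)) (hMinj : Function.Injective M)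
    (hM : ∀ k, M k ∈ GT.tiles C X ∧ GT.L1free (M k))
    (hMall : ∀ T ∈ GT.tiles C X, GT.L1free T → ∃ k, T = M k)
    (A : Matrix (Fin (n - 1)) (Fin s) ℝ)
    (hA : ∀ i k, A i k = ({p : GT.Idx n | GT.row p = i.val ∧ p ∈ M k}.ncard : ℝ))
    (F : Set (GT.Pattern n)) (hF : GT.IsMinFace (GT.PClm C lam mu) F X) :
    GT.faceDim F = Module.finrank ℝ (LinearMap.ker A.mulVecLin) :=
  stmt13_general C X lam mu s M hMinj hM hMall A hA F hF
end

section
/- Let C be a set of relations, X a C-pattern, λ = (x_{n1},...,x_{nn}), μ = (w_1(X),...,w_n(X)). Let M_1,...,M_s be the Λ1-free tiles of M_C(X), A = A_{M_C(X)} the tiling matrix, and for ε̂ ∈ ker A ⊆ R^s define Y ∈ R^{n(n+1)/2} by y_{ij} = ε̂_k if (i,j) ∈ M_k for some k ≤ s, and y_{ij} = 0 otherwise. Then for all sufficiently small rescalings of ε̂, both X + Y and X − Y lie in P_C(λ,μ). -/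
open scoped BigOperators

private lemma rk_eq {n : ℕ} (Z : GT.Pattern n) (i : Fin n) :
    GT.Rk Z i = ∑ p : GT.Idx n, if p.val.1 = i then Z p else 0 := by
  classical
  rw [GT.Rk, ← Finset.sum_filter]
  rw [show (∑ j : Fin n, if h : j ≤ i then Z ⟨(i, j), h⟩ else 0)
      = ∑ j ∈ Finset.univ.filter (fun j : Fin n => j ≤ i),
          (if h : j ≤ i then Z ⟨(i, j), h⟩ else 0) from
    (Finset.sum_subset (Finset.filter_subset _ _) (by
      intro j _ hj
      simp only [Finset.mem_filter, Finset.mem_univ, true_and] at hj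
      exact dif_neg hj)).symm]
  refine Finset.sum_bij
    (fun j hj => (⟨(i, j), (Finset.mem_filter.mp hj).2⟩ : GT.Idx n)) ?_ ?_ ?_ ?_
  · intro a ha
    simp
  · intro a ha b hb hab
    simpa [Subtype.ext_iff, Prod.ext_iff] using hab
  · intro b hb
    simp only [Finset.mem_filter, Finset.mem_univ, true_and] at hb
    refine ⟨b.val.2, Finset.mem_filter.mpr ⟨Finset.mem_univ _, hb ▸ b.prop⟩, ?_⟩
    exact Subtype.ext (Prod.ext hb.symm rfl)
  · intro a ha
    exact dif_pos (Finset.mem_filter.mp ha).2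

private lemma tile_eq_of_mem {n : ℕ} {C : GT.Rels n} {X : GT.Pattern n}
    {a b p : GT.Idx n} (ha : p ∈ GT.tile C X a) (hb : p ∈ GT.tile C X b) :
    GT.tile C X a = GT.tile C X b := by
  ext q
  constructor
  · intro hq
    exact Relation.EqvGen.trans _ _ _ (Relation.EqvGen.trans _ _ _ hb
      (Relation.EqvGen.symm _ _ ha)) hq
  · intro hq
    exact Relation.EqvGen.trans _ _ _ (Relation.EqvGen.trans _ _ _ ha
      (Relation.EqvGen.symm _ _ hb)) hq

private lemma mem_tile_trans {n : ℕ} {C : GT.Rels n} {X : GT.Pattern n}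
    {a p q : GT.Idx n} (hp : p ∈ GT.tile C X a) (hpq : GT.sameTile C X p q) :
    q ∈ GT.tile C X a :=
  Relation.EqvGen.trans _ _ _ hp hpq

/-- for `ε̂` in the kernel of the tiling matrix, the vector `Y`
with `y_{ij} = ε̂_k` on the `Λ₁`-free tile `M_k` and `0` elsewhere satisfies
`X ± tY ∈ P_C(λ,μ)` for all sufficiently small rescalings `t`. -/
theorem stmt14 {n : ℕ} (C : GT.Rels n) (X : GT.Pattern n) (hX : GT.IsPattern C X)
    (lam mu : Fin n → ℝ)
    (hlam : ∀ p : GT.Idx n, GT.row p = n - 1 → X p = lam p.val.2)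
    (hmu : ∀ k : Fin n, GT.wk X k = mu k)
    (s : ℕ) (M : Fin s → Set (GT.Idx n)) (hMinj : Function.Injective M)
    (hM : ∀ k, M k ∈ GT.tiles C X ∧ GT.L1free (M k))
    (hMall : ∀ T ∈ GT.tiles C X, GT.L1free T → ∃ k, T = M k)
    (A : Matrix (Fin (n - 1)) (Fin s) ℝ)
    (hA : ∀ i k, A i k = ({p : GT.Idx n | GT.row p = i.val ∧ p ∈ M k}.ncard : ℝ))
    (eps : Fin s → ℝ) (heps : A.mulVec eps = 0)
    (Y : GT.Pattern n)
    (hY1 : ∀ k, ∀ p ∈ M k, Y p = eps k)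
    (hY2 : ∀ p : GT.Idx n, (∀ k, p ∉ M k) → Y p = 0) :
    ∃ δ > (0 : ℝ), ∀ t : ℝ, 0 < t → t ≤ δ →
      X + t • Y ∈ GT.PClm C lam mu ∧ X - t • Y ∈ GT.PClm C lam mu := by
  classical
  -- tiles are pairwise disjoint
  have hdisj : ∀ {k k' : Fin s} {p : GT.Idx n}, p ∈ M k → p ∈ M k' → k = k' := by
    intro k k' p hk hk'
    obtain ⟨a, ha⟩ := (hM k).1
    obtain ⟨b, hb⟩ := (hM k').1
    apply hMinj
    rw [ha, hb]
    exact tile_eq_of_mem (ha ▸ hk) (hb ▸ hk')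
  -- Y is constant along edges of G(C)
  have hYedge : ∀ p q : GT.Idx n, (p, q) ∈ C → X p = X q → Y p = Y q := by
    intro p q hpq hXeq
    have hst : GT.sameTile C X p q := Relation.EqvGen.rel _ _ ⟨Or.inl hpq, hXeq⟩
    by_cases hex : ∃ k, p ∈ M k
    · obtain ⟨k, hk⟩ := hex
      obtain ⟨a, ha⟩ := (hM k).1
      have hq : q ∈ M k := by
        rw [ha]; exact mem_tile_trans (ha ▸ hk) hst
      rw [hY1 k p hk, hY1 k q hq]
    · push_neg at hex
      have hq : ∀ k, q ∉ M k := by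
        intro k hk
        obtain ⟨a, ha⟩ := (hM k).1
        exact hex k (by
          rw [ha]
          exact mem_tile_trans (ha ▸ hk) (Relation.EqvGen.symm _ _ hst))
      rw [hY2 p hex, hY2 q hq]
  -- Y vanishes on the top row
  have hYtop : ∀ p : GT.Idx n, GT.row p = n - 1 → Y p = 0 := by
    intro p hp
    exact hY2 p (fun k hk => absurd hp ((hM k).2 p hk))
  -- Y as a sum of indicators
  have hYsum : ∀ p : GT.Idx n, Y p = ∑ k : Fin s, if p ∈ M k then eps k else 0 := by
    intro p
    by_cases hex : ∃ k, p ∈ M k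
    · obtain ⟨k, hk⟩ := hex
      rw [hY1 k p hk, eq_comm, Finset.sum_eq_single k]
      · rw [if_pos hk]
      · intro k' _ hne
        exact if_neg (fun hk' => hne (hdisj hk' hk))
      · intro h; exact absurd (Finset.mem_univ k) h
    · push_neg at hex
      rw [hY2 p hex]
      exact (Finset.sum_eq_zero fun k _ => if_neg (hex k)).symm
  -- row sums of Y vanish
  have hRkY : ∀ i : Fin n, GT.Rk Y i = 0 := by
    intro i
    rw [rk_eq]
    by_cases hi : (i : ℕ) = n - 1
    · refine Finset.sum_eq_zero fun p _ => ?_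
      split_ifs with h
      · exact hYtop p (by rw [GT.row, h, hi])
      · rfl
    · have hlt : (i : ℕ) < n - 1 :=
        lt_of_le_of_ne (Nat.le_pred_of_lt i.isLt) hi
      set i' : Fin (n - 1) := ⟨i, hlt⟩ with hi'
      have h0 : ∑ k : Fin s, A i' k * eps k = 0 := by
        have := congrFun heps i'
        simpa [Matrix.mulVec, dotProduct] using this
      have hAcard : ∀ k : Fin s, A i' k * eps k
          = ∑ p : GT.Idx n, (if (GT.row p = (i : ℕ) ∧ p ∈ M k) then eps k else 0) := by
        intro k
        rw [hA]
        have hset : {p : GT.Idx n | GT.row p = i'.val ∧ p ∈ M k}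
            = ↑(Finset.univ.filter fun p : GT.Idx n => GT.row p = (i : ℕ) ∧ p ∈ M k) := by
          ext p; simp [hi']
        rw [hset, Set.ncard_coe_finset, ← Finset.sum_filter, Finset.sum_const,
          nsmul_eq_mul]
      calc (∑ p : GT.Idx n, if p.val.1 = i then Y p else 0)
          = ∑ p : GT.Idx n, ∑ k : Fin s,
              (if (GT.row p = (i : ℕ) ∧ p ∈ M k) then eps k else 0) := by
            refine Finset.sum_congr rfl fun p _ => ?_
            by_cases h : p.val.1 = i
            · rw [if_pos h, hYsum p]
              refine Finset.sum_congr rfl fun k _ => ?_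
              have hrow : GT.row p = (i : ℕ) := by rw [GT.row, h]
              simp [hrow]
            · rw [if_neg h]
              refine (Finset.sum_eq_zero fun k _ => ?_).symm
              rw [if_neg]
              rintro ⟨h1, -⟩
              exact h (Fin.ext h1)
        _ = ∑ k : Fin s, ∑ p : GT.Idx n,
              (if (GT.row p = (i : ℕ) ∧ p ∈ M k) then eps k else 0) := Finset.sum_comm
        _ = ∑ k : Fin s, A i' k * eps k :=
            Finset.sum_congr rfl fun k _ => (hAcard k).symm
        _ = 0 := h0
  -- Rk is unchanged by adding t • Y
  have key : ∀ t : ℝ, GT.Rk (X + t • Y) = GT.Rk X := by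
    intro t
    funext i
    rw [rk_eq, rk_eq]
    have h0 : (∑ p : GT.Idx n, if p.val.1 = i then Y p else 0) = 0 := by
      rw [← rk_eq]; exact hRkY i
    have hsplit : ∀ p : GT.Idx n, (if p.val.1 = i then (X + t • Y) p else 0)
        = (if p.val.1 = i then X p else 0) + t * (if p.val.1 = i then Y p else 0) := by
      intro p
      split_ifs <;> simp
    rw [Finset.sum_congr rfl fun p _ => hsplit p, Finset.sum_add_distrib,
      ← Finset.mul_sum, h0, mul_zero, add_zero]
  -- weights are unchanged
  have hw : ∀ (t : ℝ) (k : Fin n), GT.wk (X + t • Y) k = mu k := by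
    intro t k
    have h := hmu k
    rw [GT.wk] at h ⊢
    rw [key t]
    exact h
  -- top row of X + t • Y
  have htop : ∀ (t : ℝ) (p : GT.Idx n), GT.row p = n - 1 →
      (X + t • Y) p = lam p.val.2 := by
    intro t p hp
    simp only [Pi.add_apply, Pi.smul_apply, smul_eq_mul, hYtop p hp, mul_zero, add_zero]
    exact hlam p hp
  -- choice of δ
  set B : Finset (GT.Idx n × GT.Idx n) :=
    Finset.univ.filter (fun pq => X pq.2 < X pq.1 ∧ Y pq.1 ≠ Y pq.2) with hB
  set g : GT.Idx n × GT.Idx n → ℝ :=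
    fun pq => (X pq.1 - X pq.2) / |Y pq.1 - Y pq.2| with hg
  set D : Finset ℝ := insert 1 (B.image g) with hD
  have hDne : D.Nonempty := ⟨1, by simp [hD]⟩
  have hDpos : ∀ a ∈ D, 0 < a := by
    intro a haD
    rw [hD, Finset.mem_insert] at haD
    rcases haD with rfl | haD
    · exact one_pos
    · obtain ⟨pq, hpq, rfl⟩ := Finset.mem_image.mp haD
      rw [hB, Finset.mem_filter] at hpq
      exact div_pos (sub_pos.mpr hpq.2.1) (abs_pos.mpr (sub_ne_zero.mpr hpq.2.2))
  refine ⟨D.min' hDne, hDpos _ (D.min'_mem hDne), ?_⟩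
  intro t ht htd
  have habs : ∀ p q : GT.Idx n, (p, q) ∈ C → t * |Y p - Y q| ≤ X p - X q := by
    intro p q hpq
    rcases eq_or_lt_of_le (hX (p, q) hpq) with heq | hlt
    · rw [hYedge p q hpq heq.symm]
      simp [heq]
    · by_cases hYe : Y p = Y q
      · simp [hYe, le_of_lt (sub_pos.mpr hlt)]
      · have hmem : (p, q) ∈ B := by
          rw [hB, Finset.mem_filter]
          exact ⟨Finset.mem_univ _, hlt, hYe⟩
        have hle : t ≤ g (p, q) :=
          le_trans htd (Finset.min'_le _ _ (by
            rw [hD, Finset.mem_insert]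
            exact Or.inr (Finset.mem_image.mpr ⟨_, hmem, rfl⟩)))
        calc t * |Y p - Y q| ≤ g (p, q) * |Y p - Y q| :=
              mul_le_mul_of_nonneg_right hle (abs_nonneg _)
          _ = X p - X q :=
              div_mul_cancel₀ _ (abs_ne_zero.mpr (sub_ne_zero.mpr hYe))
  have hpm : ∀ c : ℝ, |c| ≤ t → GT.IsPattern C (X + c • Y) := by
    intro c hc pr hpr
    obtain ⟨p, q⟩ := pr
    simp only [Pi.add_apply, Pi.smul_apply, smul_eq_mul]
    have h1 := habs p q hpr
    have h2 : c * Y q - c * Y p ≤ X p - X q := by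
      calc c * Y q - c * Y p = -(c * (Y p - Y q)) := by ring
        _ ≤ |c * (Y p - Y q)| := neg_le_abs _
        _ = |c| * |Y p - Y q| := abs_mul _ _
        _ ≤ t * |Y p - Y q| := mul_le_mul_of_nonneg_right hc (abs_nonneg _)
        _ ≤ X p - X q := h1
    linarith
  have hneg : X - t • Y = X + (-t) • Y := by
    rw [neg_smul, sub_eq_add_neg]
  constructor
  · exact ⟨⟨hpm t (by rw [abs_of_pos ht]), htop t⟩, hw t⟩
  · rw [hneg]
    exact ⟨⟨hpm (-t) (by rw [abs_neg, abs_of_pos ht]), htop (-t)⟩, hw (-t)⟩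
end
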